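/- arXiv:1702.01433 — 10 statements merged into one kernel-verified Lean document; each statement's English description precedes it below -/
import Mathlib

section
/- The number of ordered pairs (H, K) of cyclic subgroups of a finite cyclic group G of order n = p₁^{α₁} ⋯ p_k^{α_k} (distinct primes p_i) with HK = G equals ∏_{i=1}^{k} (2α_i + 1). -/
/-!
In a finite cyclic group `G` of order `n` every subgroup is cyclic and normal, so `HK = H ⊔ K`,
and `H ↦ |H|` is a bijection from subgroups onto divisors of `n` sending `⊔` to `lcm`
(the subgroup of order `d` is the kernel of `x ↦ x ^ d`). So `CF₂(G) = c(n)`, the number of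
pairs of divisors of `n` with lcm `n`. Sorting the `τ(n)²` pairs of divisors of `n` by their lcm
gives `∑_{d ∣ n} c(d) = τ(n)²`; hence `c = μ * τ²` is multiplicative, and
`c(p^k) = (k + 1)² - k² = 2k + 1`.
-/

open Pointwise

/-- The cyclic factorization number `CF₂(G)`: the number of ordered pairs `(H, K)` of
cyclic subgroups of `G` whose set product `HK` is all of `G`. -/
noncomputable def CF2 (G : Type*) [Group G] : ℕ :=
  Nat.card {p : Subgroup G × Subgroup G //
    IsCyclic p.1 ∧ IsCyclic p.2 ∧ (p.1 : Set G) * (p.2 : Set G) = Set.univ}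

open Finset ArithmeticFunction
open scoped ArithmeticFunction.sigma ArithmeticFunction.Moebius

def lcmPairs (n : ℕ) : Finset (ℕ × ℕ) :=
  {q ∈ n.divisors ×ˢ n.divisors | q.1.lcm q.2 = n}

theorem sum_card_lcmPairs (n : ℕ) : ∑ d ∈ n.divisors, #(lcmPairs d) = #n.divisors ^ 2 := by
  rw [sq, ← card_product, card_eq_sum_card_fiberwise (f := fun q : ℕ × ℕ => q.1.lcm q.2)
    (t := n.divisors)]
  · refine sum_congr rfl fun d hd => congrArg card ?_
    obtain ⟨hdn, hn⟩ := Nat.mem_divisors.1 hd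
    ext ⟨a, b⟩
    simp only [lcmPairs, mem_filter, mem_product, Nat.mem_divisors]
    constructor
    · rintro ⟨⟨⟨ha, -⟩, hb, -⟩, rfl⟩
      exact ⟨⟨⟨ha.trans hdn, hn⟩, hb.trans hdn, hn⟩, rfl⟩
    · rintro ⟨-, rfl⟩
      have hd0 := (Nat.pos_of_mem_divisors hd).ne'
      exact ⟨⟨⟨Nat.dvd_lcm_left a b, hd0⟩, Nat.dvd_lcm_right a b, hd0⟩, rfl⟩
  · intro q hq
    obtain ⟨ha, hb⟩ := mem_product.1 hq
    exact Nat.mem_divisors.2 ⟨Nat.lcm_dvd (Nat.dvd_of_mem_divisors ha)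
      (Nat.dvd_of_mem_divisors hb), Nat.ne_zero_of_mem_divisors ha⟩

theorem card_lcmPairs_prime_pow {p : ℕ} (hp : p.Prime) (k : ℕ) :
    #(lcmPairs (p ^ k)) = 2 * k + 1 := by
  have hsum (j : ℕ) : ∑ i ∈ range (j + 1), #(lcmPairs (p ^ i)) = (j + 1) ^ 2 := by
    rw [← Nat.sum_divisors_prime_pow (f := fun d => #(lcmPairs d)) hp, sum_card_lcmPairs,
      ← sigma_zero_apply, sigma_zero_apply_prime_pow hp]
  cases k with
  | zero => simpa using hsum 0
  | succ k =>
    have := hsum (k + 1)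
    rw [sum_range_succ, hsum k] at this
    nlinarith

theorem card_lcmPairs_eq_moebius_mul {n : ℕ} (hn : 0 < n) :
    (#(lcmPairs n) : ℤ) = (μ * ((σ 0).pmul (σ 0) : ArithmeticFunction ℕ)) n := by
  have hsum (m : ℕ) (_ : 0 < m) :
      ∑ d ∈ m.divisors, (#(lcmPairs d) : ℤ) =
        (((σ 0).pmul (σ 0) : ArithmeticFunction ℕ) m : ℤ) := by
    rw [← Nat.cast_sum, sum_card_lcmPairs, pmul_apply, sigma_zero_apply, sq]
  rw [mul_apply, ← sum_eq_iff_sum_mul_moebius_eq.1 hsum n hn]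
  simp

theorem card_lcmPairs {n : ℕ} (hn : n ≠ 0) :
    #(lcmPairs n) = ∏ p ∈ n.primeFactors, (2 * n.factorization p + 1) := by
  have hmul :
      (μ * ((σ 0).pmul (σ 0) : ArithmeticFunction ℕ) : ArithmeticFunction ℤ).IsMultiplicative :=
    isMultiplicative_moebius.mul (isMultiplicative_sigma.pmul isMultiplicative_sigma).natCast
  zify
  rw [card_lcmPairs_eq_moebius_mul (Nat.pos_of_ne_zero hn),
    hmul.multiplicative_factorization _ hn, Nat.prod_factorization_eq_prod_primeFactors]
  refine prod_congr rfl fun p hp => ?_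
  have hp := Nat.prime_of_mem_primeFactors hp
  rw [← card_lcmPairs_eq_moebius_mul (pow_pos hp.pos _), card_lcmPairs_prime_pow hp]
  push_cast
  rfl

theorem CF2_eq_card_sup_eq_top (G : Type*) [Group G] [IsCyclic G] :
    CF2 G = Nat.card {p : Subgroup G × Subgroup G // p.1 ⊔ p.2 = ⊤} := by
  refine Nat.card_congr (Equiv.subtypeEquivRight fun p => ?_)
  rw [← Subgroup.mul_normal, Subgroup.coe_eq_univ]
  exact ⟨fun h => h.2.2, fun h => ⟨inferInstance, inferInstance, h⟩⟩

theorem Subgroup.le_ker_powMonoidHom {G : Type*} [CommGroup G] {H : Subgroup G} {d : ℕ}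
    (hd : Nat.card H ∣ d) : H ≤ (powMonoidHom d).ker :=
  fun _ hx => orderOf_dvd_iff_pow_eq_one.1 ((H.orderOf_dvd_natCard hx).trans hd)

namespace IsCyclic

variable {G : Type*} [CommGroup G] [Finite G] [IsCyclic G]

theorem eq_ker_powMonoidHom_natCard (H : Subgroup G) : H = (powMonoidHom (Nat.card H)).ker := by
  refine Subgroup.eq_of_le_of_card_ge (Subgroup.le_ker_powMonoidHom dvd_rfl) ?_
  rw [card_powMonoidHom_ker, Nat.gcd_eq_right (Subgroup.card_subgroup_dvd_card H)]

theorem natCard_subgroup_injective : Function.Injective fun H : Subgroup G => Nat.card H := by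
  intro H K (h : Nat.card H = Nat.card K)
  rw [eq_ker_powMonoidHom_natCard H, eq_ker_powMonoidHom_natCard K, h]

theorem exists_subgroup_natCard_eq {d : ℕ} (hd : d ∣ Nat.card G) :
    ∃ H : Subgroup G, Nat.card H = d :=
  ⟨(powMonoidHom d).ker, by rw [card_powMonoidHom_ker, Nat.gcd_eq_right hd]⟩

theorem natCard_sup (H K : Subgroup G) :
    Nat.card ↥(H ⊔ K) = (Nat.card H).lcm (Nat.card K) := by
  set m := (Nat.card H).lcm (Nat.card K)
  refine Nat.dvd_antisymm ?_ (Nat.lcm_dvd (Subgroup.card_dvd_of_le le_sup_left)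
    (Subgroup.card_dvd_of_le le_sup_right))
  have hm : m ∣ Nat.card G :=
    Nat.lcm_dvd (Subgroup.card_subgroup_dvd_card H) (Subgroup.card_subgroup_dvd_card K)
  have hle : H ⊔ K ≤ (powMonoidHom m).ker := sup_le
    (Subgroup.le_ker_powMonoidHom (Nat.dvd_lcm_left _ _))
    (Subgroup.le_ker_powMonoidHom (Nat.dvd_lcm_right _ _))
  have := Subgroup.card_dvd_of_le hle
  rwa [card_powMonoidHom_ker, Nat.gcd_eq_right hm] at this

variable (G) in
theorem card_sup_eq_top_eq_card_lcmPairs :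
    Nat.card {p : Subgroup G × Subgroup G // p.1 ⊔ p.2 = ⊤} = #(lcmPairs (Nat.card G)) := by
  have hcard (H : Subgroup G) : Nat.card H ∈ (Nat.card G).divisors :=
    Nat.mem_divisors.2 ⟨H.card_subgroup_dvd_card, Nat.card_pos.ne'⟩
  have htop (p : Subgroup G × Subgroup G) :
      p.1 ⊔ p.2 = ⊤ ↔ (Nat.card p.1).lcm (Nat.card p.2) = Nat.card G := by
    rw [← natCard_sup, Subgroup.card_eq_iff_eq_top]
  rw [← Nat.card_eq_finsetCard]
  refine Nat.card_congr (Equiv.ofBijective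
    (fun p => ⟨(Nat.card p.1.1, Nat.card p.1.2),
      mem_filter.2 ⟨mem_product.2 ⟨hcard _, hcard _⟩, (htop p).1 p.2⟩⟩)
    ⟨fun p q h => ?_, fun q => ?_⟩)
  · replace h := Prod.ext_iff.1 (Subtype.ext_iff.1 h)
    exact Subtype.ext (Prod.ext (natCard_subgroup_injective h.1) (natCard_subgroup_injective h.2))
  · obtain ⟨⟨a, b⟩, hq⟩ := q
    obtain ⟨hab, hlcm⟩ := mem_filter.1 hq
    obtain ⟨ha, hb⟩ := mem_product.1 hab
    obtain ⟨H, rfl⟩ := exists_subgroup_natCard_eq (Nat.dvd_of_mem_divisors ha)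
    obtain ⟨K, rfl⟩ := exists_subgroup_natCard_eq (Nat.dvd_of_mem_divisors hb)
    exact ⟨⟨(H, K), (htop (H, K)).2 hlcm⟩, rfl⟩

end IsCyclic

theorem cf2_cyclic (G : Type*) [Group G] [Fintype G] (hG : IsCyclic G) :
    CF2 G = ∏ q ∈ (Nat.card G).primeFactors, (2 * (Nat.card G).factorization q + 1) := by
  let := hG.commGroup
  rw [CF2_eq_card_sup_eq_top, IsCyclic.card_sup_eq_top_eq_card_lcmPairs,
    card_lcmPairs Nat.card_pos.ne']
end

section
/- For any finite group G, CF₂(G) ≤ F₂(G), where F₂(G) counts ordered pairs (H,K) of arbitrary subgroups with HK = G; moreover equality holds if and only if G is cyclic. -/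
open Pointwise

/-- The factorization number `F₂(G)`: the number of ordered pairs `(H, K)` of
subgroups of `G` whose set product `HK` is all of `G`. -/
noncomputable def F2 (G : Type*) [Group G] : ℕ :=
  Nat.card {p : Subgroup G × Subgroup G // (p.1 : Set G) * (p.2 : Set G) = Set.univ}

section FactorizationNumbers

variable (G : Type*) [Group G]

def factorizations : Set (Subgroup G × Subgroup G) :=
  {p | (p.1 : Set G) * (p.2 : Set G) = Set.univ}

lemma F2_eq_ncard : F2 G = (factorizations G).ncard :=
  Nat.card_coe_set_eq _

lemma CF2_eq_ncard :
    CF2 G = {p ∈ factorizations G | IsCyclic p.1 ∧ IsCyclic p.2}.ncard := by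
  rw [CF2, ← Nat.card_coe_set_eq]
  congr 2
  ext p
  exact and_assoc.symm.trans and_comm

variable [Finite G]

theorem CF2_le_F2 : CF2 G ≤ F2 G := by
  rw [CF2_eq_ncard, F2_eq_ncard]
  exact Set.ncard_le_ncard (Set.sep_subset _ _)

theorem CF2_eq_F2_iff :
    CF2 G = F2 G ↔ ∀ p ∈ factorizations G, IsCyclic p.1 ∧ IsCyclic p.2 := by
  rw [CF2_eq_ncard, F2_eq_ncard]
  exact ⟨fun h _ hp => Set.sep_of_ncard_eq (P := fun p => IsCyclic p.1 ∧ IsCyclic p.2) h hp,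
    fun h => congrArg Set.ncard (Set.sep_eq_self_iff_mem_true.mpr h)⟩

end FactorizationNumbers

theorem isCyclic_iff_forall_mem_factorizations {G : Type*} [Group G] :
    IsCyclic G ↔ ∀ p ∈ factorizations G, IsCyclic p.1 ∧ IsCyclic p.2 := by
  refine ⟨fun _ p _ => ⟨Subgroup.isCyclic p.1, Subgroup.isCyclic p.2⟩, fun h => ?_⟩
  exact Subgroup.topEquiv.isCyclic.mp (h (⊤, ⊤) (by simp [factorizations])).1

theorem cf2_le_f2 (G : Type*) [Group G] [Fintype G] :
    CF2 G ≤ F2 G ∧ (CF2 G = F2 G ↔ IsCyclic G) :=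
  ⟨CF2_le_F2 G, (CF2_eq_F2_iff G).trans isCyclic_iff_forall_mem_factorizations.symm⟩
end

section
/- If G₁, ..., G_k are finite groups of pairwise coprime orders, then CF₂(G₁ × ⋯ × G_k) = ∏_{i=1}^k CF₂(G_i). -/
open Pointwise

/-!
When the orders are pairwise coprime, every subgroup `H` of `∏ Gᵢ` is the product of its
projections: for `x ∈ H`, raising `x` to the power `∏_{j ≠ i} |G_j|` kills every coordinate
but the `i`-th, on which this power is invertible modulo the order of `xᵢ`, so `H` contains
the element with `xᵢ` in slot `i` and `1` elsewhere. Hence `H ↦ (πᵢ H)ᵢ` is a bijection between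
subgroups of the product and families of subgroups of the factors. A product of cyclic groups of
pairwise coprime orders is cyclic, and `HK = G` can be checked coordinatewise, so this bijection
matches the cyclic factorizations of `∏ Gᵢ` with the families of cyclic factorizations of the
`Gᵢ`.
-/

namespace Set

variable {ι : Type*} {α : ι → Type*}

theorem univ_pi_mul_univ_pi [∀ i, Mul (α i)] (s t : ∀ i, Set (α i)) :
    univ.pi s * univ.pi t = univ.pi (s * t) := by
  ext z
  simp only [mem_mul, mem_univ_pi, Pi.mul_apply]
  constructor
  · rintro ⟨x, hx, y, hy, rfl⟩ i
    exact ⟨x i, hx i, y i, hy i, rfl⟩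
  · intro h
    choose x hx y hy hxy using h
    exact ⟨x, hx, y, hy, funext hxy⟩

theorem univ_pi_eq_univ_iff [∀ i, Nonempty (α i)] {t : ∀ i, Set (α i)} :
    univ.pi t = univ ↔ ∀ i, t i = univ := by
  simpa [univ_subset_iff, pi_univ] using
    univ_pi_subset_univ_pi_iff (t₁ := fun i => (univ : Set (α i))) (t₂ := t)

end Set

section

open Set

variable {ι : Type*} {G : ι → Type*} [∀ i, Group (G i)]

theorem isCyclic_pi_of_pairwise_coprime [Fintype ι] [∀ i, Finite (G i)] [∀ i, IsCyclic (G i)]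
    (hG : Pairwise fun i j => (Nat.card (G i)).Coprime (Nat.card (G j))) :
    IsCyclic (∀ i, G i) := by
  choose g hg using fun i => IsCyclic.exists_generator (α := G i)
  refine isCyclic_of_orderOf_eq_card g ?_
  rw [Pi.orderOf, Nat.card_pi, ← Finset.lcm_eq_prod (hG.set_pairwise _)]
  simp only [orderOf_eq_card_of_forall_mem_zpowers (hg _)]

namespace Subgroup

def piUnivMulEquiv (F : ∀ i, Subgroup (G i)) : pi univ F ≃* ∀ i, F i where
  toFun x i := ⟨x.1 i, x.2 i trivial⟩
  invFun y := ⟨fun i => y i, fun i _ => (y i).2⟩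
  left_inv _ := rfl
  right_inv _ := rfl
  map_mul' _ _ := rfl

theorem map_evalMonoidHom_pi [DecidableEq ι] (F : ∀ i, Subgroup (G i)) (i : ι) :
    (pi univ F).map (Pi.evalMonoidHom G i) = F i := by
  refine le_antisymm ?_ fun y hy => ?_
  · rintro _ ⟨x, hx, rfl⟩
    exact hx i trivial
  · exact ⟨Pi.mulSingle i y, (mulSingle_mem_pi i y).mpr fun _ => hy, Pi.mulSingle_eq_same i y⟩

theorem coe_pi_mul_coe_pi_eq_univ_iff (H K : ∀ i, Subgroup (G i)) :
    (pi univ H : Set (∀ i, G i)) * (pi univ K : Set (∀ i, G i)) = univ ↔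
      ∀ i, (H i : Set (G i)) * (K i : Set (G i)) = univ := by
  rw [coe_pi, coe_pi, univ_pi_mul_univ_pi, univ_pi_eq_univ_iff]
  rfl

theorem mulSingle_apply_mem_of_pairwise_coprime [Fintype ι] [DecidableEq ι]
    (hG : Pairwise fun i j => (Nat.card (G i)).Coprime (Nat.card (G j)))
    {H : Subgroup (∀ i, G i)} {x : ∀ i, G i} (hx : x ∈ H) (i : ι) :
    Pi.mulSingle i (x i) ∈ H := by
  set m := ∏ j ∈ Finset.univ.erase i, Nat.card (G j)
  have hxm : x ^ m = Pi.mulSingle i (x i ^ m) := by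
    ext j
    rcases eq_or_ne j i with rfl | hj
    · simp
    · have hdvd : Nat.card (G j) ∣ m := Finset.dvd_prod_of_mem _ (by simpa using hj)
      simpa [hj] using
        orderOf_dvd_iff_pow_eq_one.mp ((_root_.orderOf_dvd_natCard (x j)).trans hdvd)
  have hcop : m.Coprime (orderOf (x i)) :=
    (Nat.Coprime.prod_left fun j hj => hG (Finset.ne_of_mem_erase hj)).coprime_dvd_right
      (_root_.orderOf_dvd_natCard _)
  obtain ⟨t, ht⟩ := exists_pow_eq_self_of_coprime hcop
  have := H.pow_mem (hxm ▸ H.pow_mem hx m) t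
  rwa [← Pi.mulSingle_pow, ht] at this

theorem pi_map_evalMonoidHom_of_pairwise_coprime [Finite ι] [DecidableEq ι]
    (hG : Pairwise fun i j => (Nat.card (G i)).Coprime (Nat.card (G j)))
    (H : Subgroup (∀ i, G i)) :
    pi univ (fun i => H.map (Pi.evalMonoidHom G i)) = H := by
  have := Fintype.ofFinite ι
  refine le_antisymm (pi_le_iff.mpr fun i => ?_) fun x hx i _ => ⟨x, hx, rfl⟩
  rintro _ ⟨_, ⟨x, hx, rfl⟩, rfl⟩
  exact mulSingle_apply_mem_of_pairwise_coprime hG hx i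

def piEquivOfPairwiseCoprime [Finite ι] [DecidableEq ι]
    (hG : Pairwise fun i j => (Nat.card (G i)).Coprime (Nat.card (G j))) :
    (∀ i, Subgroup (G i)) ≃ Subgroup (∀ i, G i) where
  toFun := pi univ
  invFun H i := H.map (Pi.evalMonoidHom G i)
  left_inv F := funext (map_evalMonoidHom_pi F)
  right_inv := pi_map_evalMonoidHom_of_pairwise_coprime hG

theorem isCyclic_pi_iff_of_pairwise_coprime [Fintype ι] [DecidableEq ι] [∀ i, Finite (G i)]
    (hG : Pairwise fun i j => (Nat.card (G i)).Coprime (Nat.card (G j)))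
    (F : ∀ i, Subgroup (G i)) : IsCyclic (pi univ F) ↔ ∀ i, IsCyclic (F i) := by
  refine ⟨fun h i => ?_, fun h => ?_⟩
  · rw [← map_evalMonoidHom_pi F i]
    exact isCyclic_of_surjective _ ((Pi.evalMonoidHom G i).subgroupMap_surjective _)
  · refine (piUnivMulEquiv F).isCyclic.mpr (isCyclic_pi_of_pairwise_coprime fun i j hij => ?_)
    exact ((hG hij).coprime_dvd_left (card_subgroup_dvd_card _)).coprime_dvd_right
      (card_subgroup_dvd_card _)

end Subgroup

def IsCyclicFactorization {H : Type*} [Group H] (A B : Subgroup H) : Prop :=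
  IsCyclic A ∧ IsCyclic B ∧ (A : Set H) * (B : Set H) = univ

theorem cf2_eq_card_isCyclicFactorization (H : Type*) [Group H] :
    CF2 H = Nat.card {p : Subgroup H × Subgroup H // IsCyclicFactorization p.1 p.2} :=
  rfl

theorem isCyclicFactorization_pi_iff [Fintype ι] [DecidableEq ι] [∀ i, Finite (G i)]
    (hG : Pairwise fun i j => (Nat.card (G i)).Coprime (Nat.card (G j)))
    (A B : ∀ i, Subgroup (G i)) :
    IsCyclicFactorization (Subgroup.pi univ A) (Subgroup.pi univ B) ↔
      ∀ i, IsCyclicFactorization (A i) (B i) := by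
  simp only [IsCyclicFactorization, Subgroup.isCyclic_pi_iff_of_pairwise_coprime hG,
    Subgroup.coe_pi_mul_coe_pi_eq_univ_iff, forall_and]

end

theorem cf2_pi {k : ℕ} (G : Fin k → Type*) [∀ i, Group (G i)] [∀ i, Fintype (G i)]
    (h : ∀ i j, i ≠ j → Nat.Coprime (Nat.card (G i)) (Nat.card (G j))) :
    CF2 (∀ i, G i) = ∏ i, CF2 (G i) := by
  have hG : Pairwise fun i j => (Nat.card (G i)).Coprime (Nat.card (G j)) := fun i j => h i j
  let e := Subgroup.piEquivOfPairwiseCoprime hG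
  let pairs := (Equiv.arrowProdEquivProdArrow _ _ _).trans (e.prodCongr e)
  calc CF2 (∀ i, G i)
      = Nat.card {q : ∀ i, Subgroup (G i) × Subgroup (G i) //
          ∀ i, IsCyclicFactorization (q i).1 (q i).2} :=
        (Nat.card_congr <| pairs.subtypeEquiv fun _ =>
          (isCyclicFactorization_pi_iff hG _ _).symm).symm
    _ = ∏ i, CF2 (G i) := by
      simp only [cf2_eq_card_isCyclicFactorization, ← Nat.card_pi]
      exact Nat.card_congr <| Equiv.subtypePiEquivPi
        (β := fun i => Subgroup (G i) × Subgroup (G i))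
        (p := fun _ q => IsCyclicFactorization q.1 q.2)
end

section
/- CF₂(S₃ × ℤ₂) = 12, and in particular CF₂(S₃ × ℤ₂) ≠ CF₂(S₃) · CF₂(ℤ₂). -/
/-!
A cyclic subgroup is `zpowers g`, which in a finite group `G` is the finite set of powers
`g ^ n` with `n < |G|`. So `CF₂(G)` counts the pairs of such finite sets whose pointwise
product is all of `G`, a finite computation: it gives `6` for `S₃`, `3` for `ℤ₂` and `12` for
`S₃ × ℤ₂`, and `12 ≠ 6 · 3`.
-/

open Pointwise

open Finset

section

variable {G : Type*} [Group G] [Fintype G] [DecidableEq G]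

-- Exponents below `Fintype.card G` already exhaust `zpowers g`; unlike `orderOf g`, this bound
-- is computable, so `decide` can evaluate the finset.
def powersFinset (g : G) : Finset G := (range (Fintype.card G)).image (g ^ ·)

@[simp]
theorem coe_powersFinset (g : G) : (powersFinset g : Set G) = Subgroup.zpowers g := by
  ext x
  simp only [powersFinset, coe_image, coe_range, Set.mem_image, Set.mem_Iio, SetLike.mem_coe,
    mem_zpowers_iff_mem_range_orderOf, Finset.mem_image, Finset.mem_range]
  exact ⟨fun ⟨n, _, hx⟩ =>
      ⟨n % orderOf g, Nat.mod_lt _ (orderOf_pos g), by rwa [pow_mod_orderOf]⟩,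
    fun ⟨n, hn, hx⟩ => ⟨n, hn.trans_le orderOf_le_card_univ, hx⟩⟩

variable (G) in
def cyclicFactorPairs : Finset (Finset G × Finset G) :=
  {p ∈ univ.image powersFinset ×ˢ univ.image powersFinset | p.1 * p.2 = univ}

theorem CF2_eq_card_cyclicFactorPairs : CF2 G = #(cyclicFactorPairs G) := by
  classical
  let φ : Subgroup G → Finset G := fun H => (H : Set G).toFinset
  have hφ : φ.Injective := fun H K h => SetLike.coe_injective (Set.toFinset_inj.mp h)
  have hφ_zpowers (g : G) : φ (Subgroup.zpowers g) = powersFinset g := by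
    simp [φ, ← coe_powersFinset]
  rw [CF2, ← Set.coe_ofPred, Nat.card_coe_set_eq,
    ← Set.ncard_image_of_injective _ (hφ.prodMap hφ), ← Set.ncard_coe_finset]
  congr 1
  ext ⟨A, B⟩
  simp only [cyclicFactorPairs, Set.mem_image, Set.mem_ofPred_eq, coe_filter, mem_product,
    Finset.mem_image, mem_univ, true_and, Prod.exists, Prod.map_apply, Prod.mk.injEq,
    Subgroup.isCyclic_iff_exists_zpowers_eq_top]
  constructor
  · rintro ⟨H, K, ⟨⟨g, rfl⟩, ⟨k, rfl⟩, hHK⟩, rfl, rfl⟩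
    refine ⟨⟨⟨g, (hφ_zpowers g).symm⟩, ⟨k, (hφ_zpowers k).symm⟩⟩, ?_⟩
    rw [← coe_inj, coe_mul, hφ_zpowers, hφ_zpowers]
    simpa using hHK
  · rintro ⟨⟨⟨g, rfl⟩, ⟨k, rfl⟩⟩, hgk⟩
    refine ⟨_, _, ⟨⟨g, rfl⟩, ⟨k, rfl⟩, ?_⟩, hφ_zpowers g, hφ_zpowers k⟩
    simpa [← coe_powersFinset] using congrArg ((↑) : Finset G → Set G) hgk

end

set_option maxRecDepth 100000 in
theorem CF2_perm_fin_three : CF2 (Equiv.Perm (Fin 3)) = 6 := by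
  rw [CF2_eq_card_cyclicFactorPairs]; decide

theorem CF2_multiplicative_zmod_two : CF2 (Multiplicative (ZMod 2)) = 3 := by
  rw [CF2_eq_card_cyclicFactorPairs]; decide

set_option maxRecDepth 100000 in
set_option maxHeartbeats 1000000 in
theorem CF2_perm_fin_three_prod_multiplicative_zmod_two :
    CF2 (Equiv.Perm (Fin 3) × Multiplicative (ZMod 2)) = 12 := by
  rw [CF2_eq_card_cyclicFactorPairs]; decide

theorem cf2_s3_z2 :
    CF2 (Equiv.Perm (Fin 3) × Multiplicative (ZMod 2)) = 12 ∧
    CF2 (Equiv.Perm (Fin 3) × Multiplicative (ZMod 2)) ≠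
      CF2 (Equiv.Perm (Fin 3)) * CF2 (Multiplicative (ZMod 2)) := by
  rw [CF2_perm_fin_three_prod_multiplicative_zmod_two, CF2_perm_fin_three,
    CF2_multiplicative_zmod_two]
  decide
end

section
/- For every n ≥ 4, the symmetric group S_n admits no factorization as a product of two cyclic subgroups, i.e. CF₂(S_n) = 0. -/
/-!
An element of `S_n` has order the lcm of its cycle lengths, which is at most their product; since
`k ≤ 3^(k/3)` for every `k`, that product is at most `3^(n/3)`. A cyclic subgroup of `S_n` therefore
has at most `3^(n/3)` elements, and `HK = S_n` with `H`, `K` cyclic would give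
`n! ≤ |H| |K| ≤ 9^(n/3)`, which fails for `n ≥ 4`.
-/

open Pointwise Nat

lemma pow_three_le_three_pow (k : ℕ) : k ^ 3 ≤ 3 ^ k := by
  induction k with
  | zero => norm_num
  | succ m ih =>
    rcases Nat.lt_or_ge m 3 with h | h
    · interval_cases m <;> norm_num
    · calc (m + 1) ^ 3 ≤ 3 * m ^ 3 := by
            nlinarith [Nat.mul_le_mul_right (m * m) h, Nat.mul_le_mul_right m h]
        _ ≤ 3 ^ (m + 1) := by rw [pow_succ' 3 m]; exact Nat.mul_le_mul_left 3 ih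

lemma Multiset.prod_pow_three_le_three_pow_sum (s : Multiset ℕ) : s.prod ^ 3 ≤ 3 ^ s.sum := by
  induction s using Multiset.induction with
  | empty => simp
  | cons a s ih =>
    rw [Multiset.prod_cons, Multiset.sum_cons, mul_pow, pow_add]
    exact Nat.mul_le_mul (pow_three_le_three_pow a) ih

lemma Equiv.Perm.orderOf_pow_three_le {α : Type*} [Fintype α] (σ : Perm α) :
    orderOf σ ^ 3 ≤ 3 ^ Fintype.card α := by
  classical
  have hprod_pos : 0 < σ.cycleType.prod :=
    Multiset.prod_pos fun a ha => by have := two_le_of_mem_cycleType ha; omega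
  have horder_le : orderOf σ ≤ σ.cycleType.prod := by
    rw [← lcm_cycleType]
    exact Nat.le_of_dvd hprod_pos (Multiset.lcm_dvd.mpr fun _ => Multiset.dvd_prod)
  calc orderOf σ ^ 3 ≤ σ.cycleType.prod ^ 3 := Nat.pow_le_pow_left horder_le 3
    _ ≤ 3 ^ σ.cycleType.sum := σ.cycleType.prod_pow_three_le_three_pow_sum
    _ ≤ 3 ^ Fintype.card α := by
        rw [sum_cycleType]
        exact Nat.pow_le_pow_right (by norm_num) σ.support.card_le_univ

lemma Subgroup.exists_orderOf_eq_natCard {G : Type*} [Group G] (H : Subgroup G) [IsCyclic H] :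
    ∃ g : G, orderOf g = Nat.card H := by
  obtain ⟨g, hg⟩ := IsCyclic.exists_ofOrder_eq_natCard (α := H)
  exact ⟨g, by rw [Subgroup.orderOf_coe, hg]⟩

lemma natCard_le_mul_of_mul_eq_univ {G : Type*} [Mul G] [IsCancelMul G] {s t : Set G}
    (h : s * t = Set.univ) : Nat.card G ≤ Nat.card s * Nat.card t := by
  rw [← Nat.card_univ, ← h]
  exact Set.natCard_mul_le

lemma nine_pow_lt_factorial_pow_three {n : ℕ} (hn : 4 ≤ n) : 9 ^ n < n ! ^ 3 := by
  induction n, hn using Nat.le_induction with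
  | base => decide
  | succ m hm ih =>
    calc 9 ^ (m + 1) = 9 * 9 ^ m := by ring
      _ < (m + 1) ^ 3 * m ! ^ 3 := Nat.mul_lt_mul_of_le_of_lt
          (le_trans (by norm_num) (Nat.pow_le_pow_left (show 3 ≤ m + 1 by omega) 3)) ih (by norm_num)
      _ = (m + 1)! ^ 3 := by rw [factorial_succ, mul_pow]

theorem cf2_symm_eq_zero (n : ℕ) (hn : 4 ≤ n) : CF2 (Equiv.Perm (Fin n)) = 0 := by
  rw [CF2, Nat.card_eq_zero]
  refine Or.inl ⟨fun ⟨⟨H, K⟩, hH, hK, hHK⟩ => ?_⟩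
  obtain ⟨g, hg⟩ := H.exists_orderOf_eq_natCard
  obtain ⟨k, hk⟩ := K.exists_orderOf_eq_natCard
  have hcover : n ! ≤ orderOf g * orderOf k := by
    simpa [hg, hk, Fintype.card_perm] using natCard_le_mul_of_mul_eq_univ hHK
  have horders : (orderOf g * orderOf k) ^ 3 ≤ 9 ^ n := by
    rw [mul_pow, show 9 = 3 * 3 by rfl, mul_pow]
    exact Nat.mul_le_mul (by simpa using g.orderOf_pow_three_le)
      (by simpa using k.orderOf_pow_three_le)
  exact (nine_pow_lt_factorial_pow_three hn).not_ge ((Nat.pow_le_pow_left hcover 3).trans horders)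
end

section
/- For every n ≥ 4, the alternating group A_n admits no factorization as a product of two cyclic subgroups, i.e. CF₂(A_n) = 0. -/
/-!
For `n ≥ 5` the obstruction is Itô's theorem: if `G = AB` with `A`, `B` abelian, then
`b₁ ⁅a, b⁆ b₁⁻¹ = ⁅a', b⁆` with `a' ∈ A` independent of `b`, and symmetrically
`a₁ ⁅a, b⁆ a₁⁻¹ = ⁅a, b'⁆` with `b' ∈ B` independent of `a`. So conjugating `⁅a, b⁆` by `a₁b₁`
or by `b₁a₁` gives the same `⁅a', b'⁆`, and `⁅a₁, b₁⁆` centralizes every `⁅a, b⁆`. Hence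
`⁅A, B⁆` is an abelian normal subgroup, the images of `A` and `B` commute in `G ⧸ ⁅A, B⁆`, and
`G` is metabelian, whereas `A_n` is not solvable. For `n = 4` every element of `A₄` has order at
most `3`, so a product of two cyclic subgroups has at most `9 < 12` elements.
-/

open Pointwise

open scoped commutatorElement

section

variable {G : Type*} [Group G]

theorem commutatorElement_mul_right_of_commute {a c : G} (b : G) (h : Commute a c) :
    ⁅a, b * c⁆ = ⁅a, b⁆ := by
  rw [commutatorElement_mul_right_eq_mul_conj, h.commutator_eq, mul_one, mul_inv_cancel_right]

theorem commutatorElement_mul_left_of_commute {b c : G} (a : G) (h : Commute b c) :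
    ⁅a * b, c⁆ = ⁅a, c⁆ := by
  rw [commutatorElement_mul_left_eq_conj_mul, h.commutator_eq, mul_one, mul_inv_cancel, one_mul]

theorem commute_inv_mul_of_conj_eq {g h x : G} (hx : g * x * g⁻¹ = h * x * h⁻¹) :
    Commute (h⁻¹ * g) x :=
  calc h⁻¹ * g * x = h⁻¹ * (g * x * g⁻¹) * g := by group
    _ = h⁻¹ * (h * x * h⁻¹) * g := by rw [hx]
    _ = x * (h⁻¹ * g) := by group

namespace Subgroup

def mixedCommutatorSet (A B : Subgroup G) : Set G :=
  {g | ∃ a ∈ A, ∃ b ∈ B, ⁅a, b⁆ = g}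

theorem commutator_eq_closure_mixedCommutatorSet (A B : Subgroup G) :
    ⁅A, B⁆ = closure (mixedCommutatorSet A B) :=
  commutator_def A B

variable {A B : Subgroup G}

theorem mul_eq_univ_comm (hAB : (A : Set G) * (B : Set G) = Set.univ) :
    (B : Set G) * (A : Set G) = Set.univ := by
  rw [← Set.inv_univ, ← hAB, mul_inv_rev, inv_coe_set, inv_coe_set]

theorem isMulCommutative_of_mul_eq_univ [IsMulCommutative A] [IsMulCommutative B]
    (hcomm : ∀ a ∈ A, ∀ b ∈ B, Commute a b) (hAB : (A : Set G) * (B : Set G) = Set.univ) :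
    IsMulCommutative G := by
  refine isMulCommutative_iff.mpr fun g h => ?_
  obtain ⟨a₁, ha₁, b₁, hb₁, rfl⟩ := hAB ▸ Set.mem_univ g
  obtain ⟨a₂, ha₂, b₂, hb₂, rfl⟩ := hAB ▸ Set.mem_univ h
  have ha₁₂ : Commute a₁ a₂ := setLike_mul_comm ha₁ ha₂
  have hb₁₂ : Commute b₁ b₂ := setLike_mul_comm hb₁ hb₂
  exact ((ha₁₂.mul_right (hcomm a₁ ha₁ b₂ hb₂)).mul_left
    ((hcomm a₂ ha₂ b₁ hb₁).symm.mul_right hb₁₂)).eq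

theorem exists_conj_commutatorElement_eq_left [IsMulCommutative A]
    (hBA : (B : Set G) * (A : Set G) = Set.univ) {a₁ : G} (ha₁ : a₁ ∈ A) (b : G) :
    ∃ b' ∈ B, ∀ a ∈ A, a₁ * ⁅a, b⁆ * a₁⁻¹ = ⁅a, b'⁆ := by
  obtain ⟨b', hb', a₂, ha₂, hfac⟩ := hBA ▸ Set.mem_univ (a₁ * b * a₁⁻¹)
  refine ⟨b', hb', fun a ha => ?_⟩
  rw [conjugate_commutatorElement, ← hfac, setLike_mul_comm ha₁ ha, mul_inv_cancel_right,
    commutatorElement_mul_right_of_commute _ (setLike_mul_comm ha ha₂)]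

theorem exists_conj_commutatorElement_eq_right [IsMulCommutative B]
    (hAB : (A : Set G) * (B : Set G) = Set.univ) {b₁ : G} (hb₁ : b₁ ∈ B) (a : G) :
    ∃ a' ∈ A, ∀ b ∈ B, b₁ * ⁅a, b⁆ * b₁⁻¹ = ⁅a', b⁆ := by
  obtain ⟨a', ha', b₂, hb₂, hfac⟩ := hAB ▸ Set.mem_univ (b₁ * a * b₁⁻¹)
  refine ⟨a', ha', fun b hb => ?_⟩
  rw [conjugate_commutatorElement, ← hfac, setLike_mul_comm hb₁ hb, mul_inv_cancel_right,
    commutatorElement_mul_left_of_commute _ (setLike_mul_comm hb₂ hb)]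

variable [IsMulCommutative A] [IsMulCommutative B]

theorem exists_conj_mul_commutatorElement_eq (hAB : (A : Set G) * (B : Set G) = Set.univ)
    {a₁ b₁ a b : G} (ha₁ : a₁ ∈ A) (hb₁ : b₁ ∈ B) (ha : a ∈ A) (hb : b ∈ B) :
    ∃ a' ∈ A, ∃ b' ∈ B, a₁ * b₁ * ⁅a, b⁆ * (a₁ * b₁)⁻¹ = ⁅a', b'⁆ ∧
      b₁ * a₁ * ⁅a, b⁆ * (b₁ * a₁)⁻¹ = ⁅a', b'⁆ := by
  obtain ⟨a', ha', hconjB⟩ := exists_conj_commutatorElement_eq_right hAB hb₁ a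
  obtain ⟨b', hb', hconjA⟩ := exists_conj_commutatorElement_eq_left (mul_eq_univ_comm hAB) ha₁ b
  refine ⟨a', ha', b', hb', ?_, ?_⟩
  · calc a₁ * b₁ * ⁅a, b⁆ * (a₁ * b₁)⁻¹ = a₁ * (b₁ * ⁅a, b⁆ * b₁⁻¹) * a₁⁻¹ := by group
      _ = ⁅a', b'⁆ := by rw [hconjB b hb, hconjA a' ha']
  · calc b₁ * a₁ * ⁅a, b⁆ * (b₁ * a₁)⁻¹ = b₁ * (a₁ * ⁅a, b⁆ * a₁⁻¹) * b₁⁻¹ := by group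
      _ = ⁅a', b'⁆ := by rw [hconjA a ha, hconjB b' hb']

theorem conj_mem_mixedCommutatorSet (hAB : (A : Set G) * (B : Set G) = Set.univ) (g : G)
    {x : G} (hx : x ∈ mixedCommutatorSet A B) : g * x * g⁻¹ ∈ mixedCommutatorSet A B := by
  obtain ⟨a₁, ha₁, b₁, hb₁, rfl⟩ := hAB ▸ Set.mem_univ g
  obtain ⟨a, ha, b, hb, rfl⟩ := hx
  obtain ⟨a', ha', b', hb', hconj, -⟩ := exists_conj_mul_commutatorElement_eq hAB ha₁ hb₁ ha hb
  exact ⟨a', ha', b', hb', hconj.symm⟩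

theorem commute_of_mem_mixedCommutatorSet (hAB : (A : Set G) * (B : Set G) = Set.univ)
    {x y : G} (hx : x ∈ mixedCommutatorSet A B) (hy : y ∈ mixedCommutatorSet A B) :
    Commute x y := by
  obtain ⟨a, ha, b, hb, rfl⟩ := hx
  obtain ⟨a₁, ha₁, b₁, hb₁, rfl⟩ := hy
  obtain ⟨a', -, b', -, hconj₁, hconj₂⟩ :=
    exists_conj_mul_commutatorElement_eq hAB (inv_mem ha₁) (inv_mem hb₁) ha hb
  have hcomm := commute_inv_mul_of_conj_eq (hconj₁.trans hconj₂.symm)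
  rw [show (b₁⁻¹ * a₁⁻¹)⁻¹ * (a₁⁻¹ * b₁⁻¹) = ⁅a₁, b₁⁆ by rw [commutatorElement_def]; group]
    at hcomm
  exact hcomm.symm

theorem normal_commutator_of_mul_eq_univ (hAB : (A : Set G) * (B : Set G) = Set.univ) :
    ⁅A, B⁆.Normal := by
  have hconj : Group.conjugatesOfSet (mixedCommutatorSet A B) = mixedCommutatorSet A B := by
    refine Set.Subset.antisymm (fun x hx => ?_) Group.subset_conjugatesOfSet
    obtain ⟨y, hy, hyx⟩ := Group.mem_conjugatesOfSet_iff.mp hx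
    obtain ⟨g, rfl⟩ := isConj_iff.mp hyx
    exact conj_mem_mixedCommutatorSet hAB g hy
  rw [commutator_eq_closure_mixedCommutatorSet, ← hconj]
  exact normalClosure_normal

theorem isMulCommutative_commutator_of_mul_eq_univ
    (hAB : (A : Set G) * (B : Set G) = Set.univ) :
    IsMulCommutative (⁅A, B⁆ : Subgroup G) := by
  rw [commutator_eq_closure_mixedCommutatorSet]
  exact isMulCommutative_closure fun x hx y hy => commute_of_mem_mixedCommutatorSet hAB hx hy

theorem commutator_le_commutator_of_mul_eq_univ (hAB : (A : Set G) * (B : Set G) = Set.univ) :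
    _root_.commutator G ≤ ⁅A, B⁆ := by
  have := normal_commutator_of_mul_eq_univ hAB
  rw [← Normal.quotient_commutative_iff_commutator_le]
  let π := QuotientGroup.mk' ⁅A, B⁆
  refine isMulCommutative_of_mul_eq_univ (A := A.map π) (B := B.map π) ?_ ?_
  · rintro _ ⟨a, ha, rfl⟩ _ ⟨b, hb, rfl⟩
    rw [← commutatorElement_eq_one_iff_commute, ← map_commutatorElement, ← MonoidHom.mem_ker,
      QuotientGroup.ker_mk']
    exact commutator_mem_commutator ha hb
  · rw [coe_map, coe_map, ← Set.image_mul, hAB,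
      Set.image_univ_of_surjective (QuotientGroup.mk'_surjective _)]

/-- Itô's theorem. -/
theorem derivedSeries_two_eq_bot_of_mul_eq_univ (hAB : (A : Set G) * (B : Set G) = Set.univ) :
    derivedSeries G 2 = ⊥ := by
  have := isMulCommutative_commutator_of_mul_eq_univ hAB
  have hle := commutator_le_commutator_of_mul_eq_univ hAB
  rw [derivedSeries_succ, derivedSeries_one, eq_bot_iff,
    ← commutator_self_eq_bot_iff.mpr this]
  exact commutator_mono hle hle

theorem isSolvable_of_mul_eq_univ (hAB : (A : Set G) * (B : Set G) = Set.univ) :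
    Group.IsSolvable G :=
  ⟨⟨2, derivedSeries_two_eq_bot_of_mul_eq_univ hAB⟩⟩

end Subgroup

end

theorem alternatingGroup_not_isSolvable {α : Type*} [Fintype α] [DecidableEq α]
    (h : 5 ≤ Fintype.card α) : ¬ Group.IsSolvable (alternatingGroup α) := by
  intro hsolv
  have : Group.IsSolvable (Equiv.Perm α) :=
    Group.isSolvable_of_ker_le_range (alternatingGroup α).subtype Equiv.Perm.sign
      (Subgroup.range_subtype _).ge
  exact Equiv.Perm.not_isSolvable α (by rw [Cardinal.mk_fintype]; exact_mod_cast h) this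

theorem IsCyclic.card_le_of_forall_orderOf_le {C : Type*} [Group C] [IsCyclic C] {m : ℕ}
    (h : ∀ g : C, orderOf g ≤ m) : Nat.card C ≤ m := by
  obtain ⟨g, hg⟩ := IsCyclic.exists_ofOrder_eq_natCard (α := C)
  exact hg ▸ h g

theorem Subgroup.card_le_card_mul_card_of_mul_eq_univ {G : Type*} [Group G] {H K : Subgroup G}
    (hHK : (H : Set G) * (K : Set G) = Set.univ) : Nat.card G ≤ Nat.card H * Nat.card K := by
  rw [← Nat.card_univ, ← hHK]
  exact Set.natCard_mul_le

theorem Subgroup.mul_ne_univ_of_isCyclic_of_orderOf_le {G : Type*} [Group G] {m : ℕ}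
    (h : ∀ g : G, orderOf g ≤ m) (hm : m * m < Nat.card G) (H K : Subgroup G) [IsCyclic H]
    [IsCyclic K] : (H : Set G) * (K : Set G) ≠ Set.univ := by
  intro hHK
  have hcard (L : Subgroup G) [IsCyclic L] : Nat.card L ≤ m :=
    IsCyclic.card_le_of_forall_orderOf_le fun g => (Subgroup.orderOf_coe g) ▸ h g
  have := (card_le_card_mul_card_of_mul_eq_univ hHK).trans (Nat.mul_le_mul (hcard H) (hcard K))
  omega

theorem orderOf_alternatingGroup_fin_four_le_three (g : alternatingGroup (Fin 4)) :
    orderOf g ≤ 3 := by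
  have hpow : ∀ g : alternatingGroup (Fin 4), g ^ 2 = 1 ∨ g ^ 3 = 1 := by decide
  rcases hpow g with h | h
  · exact (orderOf_le_of_pow_eq_one two_pos h).trans (by norm_num)
  · exact orderOf_le_of_pow_eq_one three_pos h

theorem cf2_alternating_eq_zero (n : ℕ) (hn : 4 ≤ n) :
    CF2 (alternatingGroup (Fin n)) = 0 := by
  rw [CF2, Nat.card_eq_zero]
  refine Or.inl ⟨fun ⟨(H, K), hH, hK, hHK⟩ => ?_⟩
  rcases hn.eq_or_lt with rfl | h5
  · refine Subgroup.mul_ne_univ_of_isCyclic_of_orderOf_le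
      orderOf_alternatingGroup_fin_four_le_three ?_ H K hHK
    rw [nat_card_alternatingGroup, Nat.card_fin]
    decide
  · exact alternatingGroup_not_isSolvable (by rwa [Fintype.card_fin])
      (Subgroup.isSolvable_of_mul_eq_univ hHK)
end

section
/- For the dihedral group D_{2n} of order 2n with n ≥ 3, the cyclic factorization number satisfies CF₂(D_{2n}) = 2n. -/
/-!
Every cyclic subgroup of `DihedralGroup n` is either a group of rotations or `⟨sr i⟩`, of
order 2. Since `|HK| ≤ |H| |K|`, a factorization `HK = G` needs `|H| |K| ≥ 2n`: two reflection
subgroups give at most `4 < 2n`, and two rotation subgroups multiply into the rotations. So one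
factor is some `⟨sr i⟩` and the other a rotation subgroup of order at least `n`, i.e. all of
`⟨r 1⟩`; conversely `⟨r 1⟩⟨sr i⟩` and `⟨sr i⟩⟨r 1⟩` are the whole group, giving `2n` pairs.
-/

open Pointwise

namespace Subgroup

variable {G : Type*} [Group G] {H K N : Subgroup G}

theorem coe_mul_coe_eq_univ_comm :
    (H : Set G) * (K : Set G) = Set.univ ↔ (K : Set G) * (H : Set G) = Set.univ := by
  constructor <;> intro h <;> simpa [mul_inv_rev, inv_coe_set] using congrArg (·⁻¹) h

theorem coe_mul_coe_ne_univ_of_le (hN : N ≠ ⊤) (hH : H ≤ N) (hK : K ≤ N) :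
    (H : Set G) * (K : Set G) ≠ Set.univ := by
  intro h
  refine hN (coe_eq_univ.mp (Set.eq_univ_of_univ_subset ?_))
  calc Set.univ = (H : Set G) * (K : Set G) := h.symm
    _ ⊆ (N : Set G) * (N : Set G) := Set.mul_subset_mul hH hK
    _ = N := N.toSubmonoid.coe_mul_self_eq

theorem card_le_card_mul_card_of_coe_mul_coe_eq_univ
    (h : (H : Set G) * (K : Set G) = Set.univ) :
    Nat.card G ≤ Nat.card H * Nat.card K := by
  calc Nat.card G = Nat.card ((H : Set G) * (K : Set G)) := by rw [h, Nat.card_univ]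
    _ ≤ Nat.card H * Nat.card K := Set.natCard_mul_le

theorem eq_of_le_of_coe_mul_coe_eq_univ [Finite G] (h : (H : Set G) * (K : Set G) = Set.univ)
    (hle : H ≤ N) (hcard : Nat.card N * Nat.card K ≤ Nat.card G) : H = N := by
  refine eq_of_le_of_card_ge hle (Nat.le_of_mul_le_mul_right ?_ (Nat.card_pos (α := K)))
  exact hcard.trans (card_le_card_mul_card_of_coe_mul_coe_eq_univ h)

theorem mem_zpowers_iff_of_orderOf_eq_two {g x : G} (hg : orderOf g = 2) :
    x ∈ zpowers g ↔ x = 1 ∨ x = g := by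
  classical
  rw [(orderOf_pos_iff.mp (hg ▸ two_pos)).mem_zpowers_iff_mem_range_orderOf, hg]
  simp [Nat.le_one_iff_eq_zero_or_eq_one, or_comm, eq_comm]

end Subgroup

namespace DihedralGroup

open Subgroup

variable {n : ℕ}

variable (n) in
def rotations : Subgroup (DihedralGroup n) := zpowers (r 1)

theorem mem_rotations {x : DihedralGroup n} : x ∈ rotations n ↔ ∃ i, x = r i := by
  refine ⟨fun ⟨k, hk⟩ ↦ ⟨k, by rw [← hk]; exact r_one_zpow k⟩, ?_⟩
  rintro ⟨i, rfl⟩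
  exact ⟨ZMod.cast i, by simp only [r_one_zpow, ZMod.intCast_zmod_cast]⟩

theorem sr_notMem_rotations (i : ZMod n) : sr i ∉ rotations n := by
  simp [mem_rotations]

theorem rotations_ne_top : rotations n ≠ ⊤ :=
  fun h ↦ sr_notMem_rotations 0 (h ▸ mem_top _)

theorem card_rotations : Nat.card (rotations n) = n := by
  rw [rotations, Nat.card_zpowers, orderOf_r_one]

theorem card_zpowers_sr (i : ZMod n) : Nat.card (zpowers (sr i)) = 2 := by
  rw [Nat.card_zpowers, orderOf_sr]

theorem zpowers_sr_injective : Function.Injective (fun i : ZMod n ↦ zpowers (sr i)) := by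
  intro i j (h : zpowers (sr i) = zpowers (sr j))
  have hi : sr i ∈ zpowers (sr j) := h ▸ mem_zpowers (sr i)
  rcases (mem_zpowers_iff_of_orderOf_eq_two (orderOf_sr j)).mp hi with h1 | h1
  · cases h1
  · exact sr.inj h1

theorem rotations_ne_zpowers_sr (i : ZMod n) : rotations n ≠ zpowers (sr i) :=
  fun h ↦ sr_notMem_rotations i (h ▸ mem_zpowers (sr i))

theorem le_rotations_or_exists_eq_zpowers_sr {H : Subgroup (DihedralGroup n)}
    (hH : IsCyclic H) :
    H ≤ rotations n ∨ ∃ i, H = zpowers (sr i) := by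
  obtain ⟨g, rfl⟩ := H.isCyclic_iff_exists_zpowers_eq_top.mp hH
  cases g with
  | r j => exact Or.inl (zpowers_le.mpr (mem_rotations.mpr ⟨j, rfl⟩))
  | sr j => exact Or.inr ⟨j, rfl⟩

theorem coe_rotations_mul_zpowers_sr (i : ZMod n) :
    (rotations n : Set (DihedralGroup n)) * (zpowers (sr i) : Set (DihedralGroup n)) =
      Set.univ := by
  refine Set.eq_univ_of_forall fun g ↦ ?_
  cases g with
  | r j => exact ⟨r j, mem_rotations.mpr ⟨j, rfl⟩, 1, one_mem _, mul_one _⟩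
  | sr j =>
    refine ⟨r (i - j), mem_rotations.mpr ⟨i - j, rfl⟩, sr i, mem_zpowers _, ?_⟩
    simp [r_mul_sr]

theorem card_rotations_mul_card_zpowers_sr (i : ZMod n) :
    Nat.card (rotations n) * Nat.card (zpowers (sr i)) = Nat.card (DihedralGroup n) := by
  rw [card_rotations, card_zpowers_sr, nat_card, mul_comm]

variable (n) in
def cyclicFactorization :
    ZMod n ⊕ ZMod n → Subgroup (DihedralGroup n) × Subgroup (DihedralGroup n) :=
  Sum.elim (fun i ↦ (rotations n, zpowers (sr i))) (fun i ↦ (zpowers (sr i), rotations n))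

theorem cyclicFactorization_injective : Function.Injective (cyclicFactorization n) := by
  rintro (i | i) (j | j) h <;> simp only [cyclicFactorization, Sum.elim_inl, Sum.elim_inr,
    Prod.mk.injEq] at h
  · exact congrArg Sum.inl (zpowers_sr_injective h.2)
  · exact absurd h.1 (rotations_ne_zpowers_sr j)
  · exact absurd h.1.symm (rotations_ne_zpowers_sr i)
  · exact congrArg Sum.inr (zpowers_sr_injective h.1)

theorem isCyclic_and_coe_mul_coe_eq_univ_iff (hn : 3 ≤ n) (H K : Subgroup (DihedralGroup n)) :
    IsCyclic H ∧ IsCyclic K ∧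
        (H : Set (DihedralGroup n)) * (K : Set (DihedralGroup n)) = Set.univ ↔
      (H, K) ∈ Set.range (cyclicFactorization n) := by
  have : NeZero n := ⟨by omega⟩
  constructor
  · rintro ⟨hH, hK, h⟩
    rcases le_rotations_or_exists_eq_zpowers_sr hH with hH | ⟨i, rfl⟩ <;>
      rcases le_rotations_or_exists_eq_zpowers_sr hK with hK | ⟨j, rfl⟩
    · exact absurd h (coe_mul_coe_ne_univ_of_le rotations_ne_top hH hK)
    · refine ⟨Sum.inl j, ?_⟩
      rw [eq_of_le_of_coe_mul_coe_eq_univ h hH (card_rotations_mul_card_zpowers_sr j).le]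
      rfl
    · refine ⟨Sum.inr i, ?_⟩
      rw [eq_of_le_of_coe_mul_coe_eq_univ (coe_mul_coe_eq_univ_comm.mp h) hK
        (card_rotations_mul_card_zpowers_sr i).le]
      rfl
    · have hcard := card_le_card_mul_card_of_coe_mul_coe_eq_univ h
      rw [nat_card, card_zpowers_sr, card_zpowers_sr] at hcard
      omega
  · rintro ⟨i | i, h⟩ <;>
      obtain ⟨rfl, rfl⟩ := Prod.mk.inj h
    · exact ⟨inferInstanceAs (IsCyclic (zpowers _)), inferInstance,
        coe_rotations_mul_zpowers_sr i⟩
    · exact ⟨inferInstance, inferInstanceAs (IsCyclic (zpowers _)),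
        coe_mul_coe_eq_univ_comm.mp (coe_rotations_mul_zpowers_sr i)⟩

end DihedralGroup

theorem cf2_dihedral (n : ℕ) (hn : 3 ≤ n) : CF2 (DihedralGroup n) = 2 * n := by
  have : NeZero n := ⟨by omega⟩
  rw [CF2, Nat.card_congr (Equiv.subtypeEquivRight
      fun p : Subgroup (DihedralGroup n) × Subgroup (DihedralGroup n) ↦
        DihedralGroup.isCyclic_and_coe_mul_coe_eq_univ_iff hn p.1 p.2),
    Nat.card_range_of_injective DihedralGroup.cyclicFactorization_injective, Nat.card_sum,
    Nat.card_zmod, two_mul]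
end

section
/- For n ≥ 4, the cyclic factorization number of the generalized quaternion group Q_{2^n} of order 2^n is CF₂(Q_{2^n}) = 2^{n-1}. -/
open Pointwise

/-!
Mathlib's `QuaternionGroup m` is `Q_{4m}`, with elements `a i` and `xa i` for `i : ZMod (2m)`.
A cyclic subgroup is either contained in `A = ⟨a 1⟩`, or is one of the `m` subgroups
`⟨xa j⟩ = {1, a m, xa j, xa (j + m)}` of order 4. Two subgroups of `A` multiply into `A`; two
subgroups of order 4 share `a m`, so their product has at most 8 < 4m elements. Hence a
factorization `G = HK` pairs some `⟨xa j⟩` with a subgroup `H ≤ A`, and writing `a 1 = h k`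
forces `a 1` or `a (1 + m)` into `H`; for even `m` the latter also generates `A`, so `H = A`.
This leaves the `2m` pairs `(A, ⟨xa j⟩)` and `(⟨xa j⟩, A)`.
-/

theorem ZMod.natCast_add_self_eq_zero (n : ℕ) : (n : ZMod (2 * n)) + n = 0 := by
  rw [← two_mul]
  exact_mod_cast ZMod.natCast_self (2 * n)

theorem Subgroup.mul_eq_univ_comm_s14 {G : Type*} [Group G] {H K : Subgroup G} :
    (H * K : Set G) = Set.univ ↔ (K * H : Set G) = Set.univ := by
  suffices ∀ H K : Subgroup G, (H * K : Set G) = Set.univ → (K * H : Set G) = Set.univ from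
    ⟨this H K, this K H⟩
  intro H K h
  rw [← inv_coe_set (H := H), ← inv_coe_set (H := K), ← mul_inv_rev, h, Set.inv_univ]

namespace QuaternionGroup

open Subgroup

variable {m : ℕ}

theorem a_pow (i : ZMod (2 * m)) (k : ℕ) : a i ^ k = a (i * (k : ZMod (2 * m))) := by
  induction k with
  | zero => rw [pow_zero, Nat.cast_zero, mul_zero, a_zero]
  | succ k ih => rw [pow_succ, ih, a_mul_a, Nat.cast_succ, mul_add_one]

theorem a_one_mem_of_a_one_add_mem (hm : Even m) {H : Subgroup (QuaternionGroup m)}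
    (h : a (1 + m) ∈ H) : a 1 ∈ H := by
  obtain ⟨t, ht⟩ := hm
  -- `a (1 + m) ^ (m + 1) = a 1`, since `(1 + m) ^ 2 = 1 + 2m (1 + m / 2)`
  have hsq : (1 + (m : ZMod (2 * m))) * ((m + 1 : ℕ) : ZMod (2 * m)) = 1 := by
    have htz : (m : ZMod (2 * m)) = t + t := (congrArg Nat.cast ht).trans (Nat.cast_add t t)
    push_cast
    linear_combination (1 + t) * ZMod.natCast_add_self_eq_zero m + m * htz
  simpa only [a_pow, hsq] using pow_mem h (m + 1)

variable [NeZero m]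

theorem mem_zpowers_a_one_iff {g : QuaternionGroup m} : g ∈ zpowers (a 1) ↔ ∃ i, g = a i := by
  rw [← mem_powers_iff_mem_zpowers]
  constructor
  · rintro ⟨k, rfl⟩
    exact ⟨k, a_one_pow k⟩
  · rintro ⟨i, rfl⟩
    exact ⟨i.val, by simp only [a_one_pow, ZMod.natCast_zmod_val]⟩

theorem mem_zpowers_xa_iff {j : ZMod (2 * m)} {g : QuaternionGroup m} :
    g ∈ zpowers (xa j) ↔
      g = 1 ∨ g = a m ∨ g = xa j ∨ g = xa (j + (m : ZMod (2 * m))) := by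
  classical
  have hneg : -(m : ZMod (2 * m)) = m :=
    neg_eq_of_add_eq_zero_left (ZMod.natCast_add_self_eq_zero m)
  rw [mem_zpowers_iff_mem_range_orderOf, orderOf_xa]
  simp [Finset.range_add_one, pow_succ, xa_mul_xa, sub_eq_add_neg, hneg, or_comm, or_left_comm,
    or_assoc]

theorem le_zpowers_a_one_or_exists_eq_zpowers_xa {H : Subgroup (QuaternionGroup m)}
    (hH : IsCyclic H) : H ≤ zpowers (a 1) ∨ ∃ j, H = zpowers (xa j) := by
  obtain ⟨g, rfl⟩ := H.isCyclic_iff_exists_zpowers_eq_top.mp hH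
  cases g with
  | a i => exact Or.inl (zpowers_le.mpr (mem_zpowers_a_one_iff.mpr ⟨i, rfl⟩))
  | xa j => exact Or.inr ⟨j, rfl⟩

theorem zpowers_xa_eq_zpowers_xa_iff {i j : ZMod (2 * m)} :
    zpowers (xa i) = zpowers (xa j) ↔ i = j ∨ i = j + m := by
  constructor
  · intro h
    have hi : xa i ∈ zpowers (xa j) := h ▸ mem_zpowers _
    simpa [mem_zpowers_xa_iff, one_def, -a_zero] using hi
  · rintro (rfl | rfl)
    · rfl
    · apply le_antisymm <;> rw [zpowers_le, mem_zpowers_xa_iff]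
      · simp
      · simp [add_assoc, ZMod.natCast_add_self_eq_zero]

theorem zpowers_a_one_ne_zpowers_xa (hm : m ≠ 2) (j : ZMod (2 * m)) :
    zpowers (a 1) ≠ zpowers (xa j) := by
  intro h
  have hcard := congrArg (fun H : Subgroup (QuaternionGroup m) => Nat.card H) h
  simp only [Nat.card_zpowers, orderOf_a_one, orderOf_xa] at hcard
  omega

theorem natCard_range_zpowers_xa :
    Nat.card (Set.range fun j : ZMod (2 * m) => zpowers (xa j)) = m := by
  let f : ℕ → Subgroup (QuaternionGroup m) := fun k => zpowers (xa k)
  have hf : Function.Periodic f m := fun k => by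
    simp only [f, Nat.cast_add, zpowers_xa_eq_zpowers_xa_iff, or_true]
  have hrange : (Set.range fun j : ZMod (2 * m) => zpowers (xa j)) =
      Set.range fun k : Fin m => f k := by
    ext H
    constructor
    · rintro ⟨j, rfl⟩
      exact ⟨⟨j.val % m, Nat.mod_lt _ (NeZero.pos m)⟩, by simp [f, hf.map_mod_nat]⟩
    · rintro ⟨k, rfl⟩
      exact ⟨_, rfl⟩
  rw [hrange, Nat.card_range_of_injective, Nat.card_eq_fintype_card, Fintype.card_fin]
  intro u v huv
  have hu := u.isLt
  have hv := v.isLt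
  rcases zpowers_xa_eq_zpowers_xa_iff.mp huv with h | h
  · rw [ZMod.natCast_eq_natCast_iff', Nat.mod_eq_of_lt (by omega),
      Nat.mod_eq_of_lt (by omega)] at h
    exact Fin.ext h
  · rw [← Nat.cast_add, ZMod.natCast_eq_natCast_iff', Nat.mod_eq_of_lt (by omega),
      Nat.mod_eq_of_lt (by omega)] at h
    omega

theorem zpowers_a_one_mul_zpowers_xa_eq_univ (j : ZMod (2 * m)) :
    (zpowers (a 1 : QuaternionGroup m) * zpowers (xa j) : Set (QuaternionGroup m)) =
      Set.univ := by
  refine Set.eq_univ_of_forall fun g => ?_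
  cases g with
  | a i => exact ⟨a i, mem_zpowers_a_one_iff.mpr ⟨i, rfl⟩, 1, one_mem _, mul_one _⟩
  | xa i =>
    exact ⟨a (j - i), mem_zpowers_a_one_iff.mpr ⟨_, rfl⟩, xa j, mem_zpowers _,
      (a_mul_xa _ _).trans (congrArg xa (sub_sub_cancel _ _))⟩

theorem mul_ne_univ_of_le_zpowers_a_one {H K : Subgroup (QuaternionGroup m)}
    (hH : H ≤ zpowers (a 1)) (hK : K ≤ zpowers (a 1)) :
    (H * K : Set (QuaternionGroup m)) ≠ Set.univ := by
  intro h
  have hxa : xa 0 ∈ (zpowers (a 1 : QuaternionGroup m) : Set (QuaternionGroup m)) := by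
    rw [← coe_mul_coe (zpowers (a 1))]
    exact Set.mul_subset_mul hH hK (h ▸ Set.mem_univ (xa 0))
  simpa using mem_zpowers_a_one_iff.mp hxa

theorem coe_zpowers_xa_subset_pair_mul (i j : ZMod (2 * m)) :
    (zpowers (xa i) : Set (QuaternionGroup m)) ⊆
      ({1, xa i} * zpowers (xa j) : Set (QuaternionGroup m)) := by
  have ham : a m ∈ zpowers (xa j) := mem_zpowers_xa_iff.mpr (Or.inr (Or.inl rfl))
  intro g hg
  rcases mem_zpowers_xa_iff.mp hg with rfl | rfl | rfl | rfl
  · exact ⟨1, by simp, 1, one_mem _, mul_one _⟩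
  · exact ⟨1, by simp, a m, ham, one_mul _⟩
  · exact ⟨xa i, by simp, 1, one_mem _, mul_one _⟩
  · exact ⟨xa i, by simp, a m, ham, xa_mul_a _ _⟩

theorem zpowers_xa_mul_zpowers_xa_ne_univ (hm : 2 < m) (i j : ZMod (2 * m)) :
    (zpowers (xa i) * zpowers (xa j) : Set (QuaternionGroup m)) ≠ Set.univ := by
  intro h
  have hsub : Set.univ ⊆ ({1, xa i} * zpowers (xa j) : Set (QuaternionGroup m)) := calc
    Set.univ = (zpowers (xa i) * zpowers (xa j) : Set (QuaternionGroup m)) := h.symm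
    _ ⊆ {1, xa i} * zpowers (xa j) * zpowers (xa j) :=
      Set.mul_subset_mul_right (coe_zpowers_xa_subset_pair_mul i j)
    _ = {1, xa i} * zpowers (xa j) := by rw [mul_assoc, coe_mul_coe]
  have hcard : 4 * m ≤ 2 * 4 := calc
    4 * m = Nat.card (Set.univ : Set (QuaternionGroup m)) := by
      rw [Nat.card_univ, Nat.card_eq_fintype_card, card]
    _ ≤ Nat.card ({1, xa i} * zpowers (xa j) : Set (QuaternionGroup m)) :=
      Nat.card_mono (Set.toFinite _) hsub
    _ ≤ Nat.card ({1, xa i} : Set (QuaternionGroup m)) * Nat.card (zpowers (xa j)) :=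
      Set.natCard_mul_le
    _ = 2 * 4 := by
      rw [Nat.card_zpowers, orderOf_xa, Nat.card_coe_set_eq,
        Set.ncard_pair (by rw [one_def]; exact nofun)]
  omega

theorem eq_zpowers_a_one_of_mul_zpowers_xa_eq_univ (hm : Even m)
    {H : Subgroup (QuaternionGroup m)} (hH : H ≤ zpowers (a 1)) {j : ZMod (2 * m)}
    (h : (H * zpowers (xa j) : Set (QuaternionGroup m)) = Set.univ) : H = zpowers (a 1) := by
  refine le_antisymm hH (zpowers_le.mpr ?_)
  obtain ⟨g, hg, k, hk, hgk⟩ := Set.mem_mul.mp (h ▸ Set.mem_univ (a 1))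
  obtain ⟨s, rfl⟩ := mem_zpowers_a_one_iff.mp (hH hg)
  rcases mem_zpowers_xa_iff.mp hk with rfl | rfl | rfl | rfl
  · rw [mul_one] at hgk
    exact hgk ▸ hg
  · rw [a_mul_a, a.injEq] at hgk
    refine a_one_mem_of_a_one_add_mem hm ?_
    convert SetLike.mem_coe.mp hg using 2
    linear_combination ZMod.natCast_add_self_eq_zero m - hgk
  · simp [a_mul_xa] at hgk
  · simp [a_mul_xa] at hgk

theorem isCyclic_and_mul_eq_univ_iff (hm : Even m) (hm2 : 2 < m)
    {H K : Subgroup (QuaternionGroup m)} :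
    IsCyclic H ∧ IsCyclic K ∧ (H * K : Set (QuaternionGroup m)) = Set.univ ↔
      ∃ j, (H = zpowers (a 1) ∧ K = zpowers (xa j)) ∨
        (H = zpowers (xa j) ∧ K = zpowers (a 1)) := by
  constructor
  · rintro ⟨hH, hK, h⟩
    rcases le_zpowers_a_one_or_exists_eq_zpowers_xa hH with hHA | ⟨i, rfl⟩ <;>
      rcases le_zpowers_a_one_or_exists_eq_zpowers_xa hK with hKA | ⟨j, rfl⟩
    · exact absurd h (mul_ne_univ_of_le_zpowers_a_one hHA hKA)
    · exact ⟨j, Or.inl ⟨eq_zpowers_a_one_of_mul_zpowers_xa_eq_univ hm hHA h, rfl⟩⟩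
    · exact ⟨i, Or.inr ⟨rfl, eq_zpowers_a_one_of_mul_zpowers_xa_eq_univ hm hKA
        (mul_eq_univ_comm_s14.mp h)⟩⟩
    · exact absurd h (zpowers_xa_mul_zpowers_xa_ne_univ hm2 i j)
  · rintro ⟨j, ⟨rfl, rfl⟩ | ⟨rfl, rfl⟩⟩
    · exact ⟨inferInstance, inferInstance, zpowers_a_one_mul_zpowers_xa_eq_univ j⟩
    · exact ⟨inferInstance, inferInstance,
        mul_eq_univ_comm_s14.mp (zpowers_a_one_mul_zpowers_xa_eq_univ j)⟩

end QuaternionGroup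

open QuaternionGroup Subgroup in
theorem cf2_quaternionGroup {m : ℕ} (hm : Even m) (hm2 : 2 < m) :
    CF2 (QuaternionGroup m) = 2 * m := by
  have : NeZero m := ⟨by omega⟩
  set X := Set.range fun j : ZMod (2 * m) => zpowers (xa j)
  have hset : {p : Subgroup (QuaternionGroup m) × Subgroup (QuaternionGroup m) |
      IsCyclic p.1 ∧ IsCyclic p.2 ∧ (p.1 * p.2 : Set (QuaternionGroup m)) = Set.univ} =
      (fun K => (zpowers (a 1), K)) '' X ∪ (fun H => (H, zpowers (a 1))) '' X := by
    ext ⟨H, K⟩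
    rw [Set.mem_ofPred_eq, isCyclic_and_mul_eq_univ_iff hm hm2]
    simp only [X, Set.mem_union, Set.mem_image, Set.exists_range_iff, Prod.mk.injEq,
      ← exists_or, eq_comm]
  have hdisj : Disjoint ((fun K => (zpowers (a 1), K)) '' X)
      ((fun H => (H, zpowers (a 1))) '' X) := by
    rw [Set.disjoint_left]
    rintro _ ⟨K, -, rfl⟩ ⟨_, ⟨j, rfl⟩, hj⟩
    exact zpowers_a_one_ne_zpowers_xa hm2.ne' j (Prod.mk.inj hj).1.symm
  rw [CF2, ← Set.coe_ofPred, Nat.card_coe_set_eq, hset, Set.ncard_union_eq hdisj,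
    Set.ncard_image_of_injective _ (Prod.mk_right_injective _),
    Set.ncard_image_of_injective _ (Prod.mk_left_injective _),
    ← Nat.card_coe_set_eq, natCard_range_zpowers_xa, two_mul]

theorem cf2_generalized_quaternion (n : ℕ) (hn : 4 ≤ n) :
    CF2 (QuaternionGroup (2 ^ (n - 2))) = 2 ^ (n - 1) := by
  have hm : Even (2 ^ (n - 2)) := (Nat.even_pow' (by omega)).mpr even_two
  have hm2 : 2 < 2 ^ (n - 2) := calc
    2 < 2 ^ 2 := by norm_num
    _ ≤ 2 ^ (n - 2) := Nat.pow_le_pow_right two_pos (by omega)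
  rw [cf2_quaternionGroup hm hm2, ← pow_succ']
  congr 1
  omega
end

section
/- For n ≥ 4, the cyclic factorization number of the quasi-dihedral (semidihedral) group S_{2^n} of order 2^n is CF₂(S_{2^n}) = 3·2^{n-2}. -/
open Pointwise

/-!
Let `X = ⟨x⟩`, cyclic of order `4q` (`q = 2 ^ (n - 3)`) and of index 2. Every element outside `X`
is `g = x ^ k * y`, with `g ^ 2 = z ^ k` for the involution `z = x ^ (2q)`; so a cyclic subgroup
not contained in `X` has order at most 4 and meets `X` inside `⟨z⟩ ≤ ⟨x²⟩`.

If `G = HK` with `H`, `K` cyclic, one factor is `X`: if neither lies in `X` then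
`HK ⊆ {1, g} ⟨z⟩ {1, h}` has at most `8 < |G|` elements; otherwise both `H ∩ X` and `K ∩ X` lie
in `⟨x²⟩` (a proper subgroup of a cyclic 2-group lies in its maximal subgroup) and one factor lies
in `X`, which keeps `x` out of `HK`. Conversely `XK = KX = G` whenever `K ⊄ X`, as `X` has index 2.
Hence `CF₂(G)` is twice the number of cyclic `K ⊄ X`. These are the `⟨x ^ k * y⟩`, where
`⟨x ^ j * y⟩ = ⟨x ^ k * y⟩` iff `x ^ j * y` is `x ^ k * y` or its inverse `x ^ ((1 - 2q) k) * y`: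
`2q` of order 2 (`k` even) and `q` of order 4 (`k` odd), `3q` in all.
-/

open Subgroup Set

section

variable {G : Type*} [Group G]

lemma zpow_mem_pair_mul {g : G} {Z : Subgroup G} (hg : g ^ 2 ∈ Z) (t : ℤ) :
    g ^ t ∈ ({1, g} : Set G) * (Z : Set G) := by
  obtain ⟨s, rfl | rfl⟩ := Int.even_or_odd' t
  · exact ⟨1, by simp, g ^ (2 * s), by rw [zpow_mul, zpow_ofNat]; exact Z.zpow_mem hg s,
      one_mul _⟩
  · refine ⟨g, by simp, g ^ (2 * s), by rw [zpow_mul, zpow_ofNat]; exact Z.zpow_mem hg s, ?_⟩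
    rw [add_comm, zpow_one_add]

lemma zpow_mem_mul_pair {g : G} {Z : Subgroup G} (hg : g ^ 2 ∈ Z) (t : ℤ) :
    g ^ t ∈ (Z : Set G) * {1, g} := by
  obtain ⟨s, rfl | rfl⟩ := Int.even_or_odd' t
  · exact ⟨g ^ (2 * s), by rw [zpow_mul, zpow_ofNat]; exact Z.zpow_mem hg s, 1, by simp,
      mul_one _⟩
  · exact ⟨g ^ (2 * s), by rw [zpow_mul, zpow_ofNat]; exact Z.zpow_mem hg s, g, by simp,
      (zpow_add_one _ _).symm⟩

lemma card_zpowers_mul_zpowers_le {g h : G} {Z : Subgroup G} [Finite Z]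
    (hg : g ^ 2 ∈ Z) (hh : h ^ 2 ∈ Z) :
    Nat.card ((zpowers g : Set G) * (zpowers h : Set G)) ≤ 4 * Nat.card Z := by
  set A : Set G := {1, g}
  set B : Set G := {1, h}
  have hsub : (zpowers g : Set G) * (zpowers h : Set G) ⊆ A * (Z : Set G) * B := by
    rintro _ ⟨_, ⟨s, rfl⟩, _, ⟨t, rfl⟩, rfl⟩
    obtain ⟨a, ha, c, hc, hac⟩ := zpow_mem_pair_mul hg s
    obtain ⟨d, hd, b, hb, hdb⟩ := zpow_mem_mul_pair hh t
    refine ⟨a * (c * d), ⟨a, ha, c * d, Z.mul_mem hc hd, rfl⟩, b, hb, ?_⟩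
    simp only [← hac, ← hdb, mul_assoc]
  have hpair : ∀ a : G, Nat.card ({1, a} : Set G) ≤ 2 := fun a => by
    rw [Nat.card_coe_set_eq]
    exact (ncard_insert_le _ _).trans (by simp)
  have hfin : (A * (Z : Set G) * B).Finite :=
    ((toFinite A).mul (toFinite (Z : Set G))).mul (toFinite B)
  calc Nat.card ((zpowers g : Set G) * (zpowers h : Set G))
      ≤ Nat.card ↥(A * (Z : Set G) * B) := Nat.card_mono hfin hsub
    _ ≤ Nat.card ↥(A * (Z : Set G)) * Nat.card B := natCard_mul_le
    _ ≤ Nat.card A * Nat.card Z * Nat.card B := by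
        gcongr; exact natCard_mul_le
    _ ≤ 2 * Nat.card Z * 2 := by gcongr <;> apply hpair
    _ = 4 * Nat.card Z := by ring

lemma zpowers_inf_le_of_sq_mem {g : G} {X Z : Subgroup G} (hZX : Z ≤ X) (hgX : g ∉ X)
    (hg : g ^ 2 ∈ Z) : zpowers g ⊓ X ≤ Z := by
  rintro _ ⟨⟨t, rfl⟩, ht⟩
  obtain ⟨a, ha, c, hc, hac⟩ := zpow_mem_pair_mul hg t
  simp only at hac ht ⊢
  rw [← hac] at ht ⊢
  rcases ha with rfl | rfl
  · simpa using hc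
  · exact absurd ((X.mul_mem_cancel_right (hZX hc)).mp ht) hgX

lemma mem_zpowers_of_pow_four_eq_one {g h : G} (hg : g ^ 4 = 1) (hh : h ∈ zpowers g) :
    h = 1 ∨ h = g ∨ h = g ^ 2 ∨ h = g⁻¹ := by
  obtain ⟨t, rfl⟩ := hh
  have hmod : g ^ t = g ^ (t % 4) := by
    conv_lhs => rw [← Int.emod_add_mul_ediv t 4, zpow_add, zpow_mul, zpow_ofNat, hg, one_zpow,
      mul_one]
  have h0 := Int.emod_nonneg t (by norm_num : (4 : ℤ) ≠ 0)
  have h4 := Int.emod_lt_of_pos t (by norm_num : (0 : ℤ) < 4)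
  simp only [hmod]
  generalize t % 4 = r at h0 h4
  interval_cases r
  · simp
  · simp
  · simp
  · refine .inr (.inr (.inr (eq_inv_of_mul_eq_one_left ?_)))
    rw [← zpow_add_one]; exact_mod_cast hg

lemma le_zpowers_sq_of_le_zpowers {x : G} {m : ℕ} (hx : orderOf x = 2 ^ m) {H : Subgroup G}
    (hH : H ≤ zpowers x) (hxH : x ∉ H) : H ≤ zpowers (x ^ 2) := by
  intro a ha
  obtain ⟨k, rfl⟩ := hH ha
  obtain ⟨s, rfl | rfl⟩ := Int.even_or_odd' k
  · exact ⟨s, by simp [zpow_mul]⟩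
  · refine absurd ((zpowers_le.mpr ha) ?_) hxH
    rw [mem_zpowers_zpow_iff, hx, ← Int.isCoprime_iff_gcd_eq_one, Nat.cast_pow]
    exact IsCoprime.pow_right ⟨1, -s, by push_cast; ring⟩

lemma notMem_zpowers_sq {x : G} (hx : Even (orderOf x)) : x ∉ zpowers (x ^ 2) := by
  rintro ⟨t, ht⟩
  have hdvd : (orderOf x : ℤ) ∣ 2 * t - 1 := by
    rw [orderOf_dvd_iff_zpow_eq_one, zpow_sub_one, zpow_mul]
    simp [ht]
  have := (Int.natCast_dvd_natCast.mpr (even_iff_two_dvd.mp hx)).trans hdvd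
  omega

lemma coe_mul_ne_univ_of_inf_le {X E H K : Subgroup G} (hXE : ¬X ≤ E) (hH : H ⊓ X ≤ E)
    (hK : K ⊓ X ≤ E) (hHK : H ≤ X ∨ K ≤ X) : (H : Set G) * (K : Set G) ≠ univ := by
  intro hmul
  obtain ⟨x, hxX, hxE⟩ := SetLike.not_le_iff_exists.mp hXE
  obtain ⟨a, ha, b, hb, rfl⟩ := hmul.symm ▸ mem_univ x
  have haX : a ∈ X ↔ b ∈ X := ⟨fun h => (X.mul_mem_cancel_left h).mp hxX,
    fun h => (X.mul_mem_cancel_right h).mp hxX⟩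
  have hab : a ∈ X ∧ b ∈ X := by
    rcases hHK with h | h
    · exact ⟨h ha, haX.mp (h ha)⟩
    · exact ⟨haX.mpr (h hb), h hb⟩
  exact hxE (E.mul_mem (hH ⟨ha, hab.1⟩) (hK ⟨hb, hab.2⟩))

lemma coe_mul_coe_eq_univ_of_index_eq_two {X K : Subgroup G} (hX : X.index = 2)
    (hK : ¬K ≤ X) : (X : Set G) * (K : Set G) = univ ∧ (K : Set G) * (X : Set G) = univ := by
  obtain ⟨k, hkK, hkX⟩ := SetLike.not_le_iff_exists.mp hK
  have hmem : ∀ g, g ∉ X → g * k⁻¹ ∈ X ∧ k⁻¹ * g ∈ X := fun g hg => by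
    simp [mul_mem_iff_of_index_two hX, hg, hkX]
  constructor <;> refine eq_univ_of_forall fun g => ?_ <;> by_cases hg : g ∈ X
  · exact ⟨g, hg, 1, K.one_mem, mul_one g⟩
  · exact ⟨g * k⁻¹, (hmem g hg).1, k, hkK, inv_mul_cancel_right g k⟩
  · exact ⟨1, K.one_mem, g, hg, one_mul g⟩
  · exact ⟨k, hkK, k⁻¹ * g, (hmem g hg).2, mul_inv_cancel_left k g⟩

lemma cf2_eq_two_mul_card [Finite G] {X : Subgroup G} [IsCyclic X] (hX : X.index = 2)
    (hfac : ∀ H K : Subgroup G, IsCyclic H → IsCyclic K → (H : Set G) * (K : Set G) = univ →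
      H = X ∨ K = X) :
    CF2 G = 2 * Nat.card {K : Subgroup G // IsCyclic K ∧ ¬K ≤ X} := by
  set S := {K : Subgroup G // IsCyclic K ∧ ¬K ≤ X}
  have hXtop : ¬(⊤ : Subgroup G) ≤ X := fun h => by simp [top_le_iff.mp h] at hX
  let Φ : S ⊕ S → {p : Subgroup G × Subgroup G //
      IsCyclic p.1 ∧ IsCyclic p.2 ∧ (p.1 : Set G) * (p.2 : Set G) = univ} :=
    Sum.elim (fun K => ⟨(X, K), ‹_›, K.2.1, (coe_mul_coe_eq_univ_of_index_eq_two hX K.2.2).1⟩)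
      (fun K => ⟨(K, X), K.2.1, ‹_›, (coe_mul_coe_eq_univ_of_index_eq_two hX K.2.2).2⟩)
  have hΦ : Function.Bijective Φ := by
    constructor
    · rintro (K | K) (K' | K') h <;> simp only [Φ, Sum.elim_inl, Sum.elim_inr, Subtype.mk.injEq,
        Prod.mk.injEq] at h
      · rw [Subtype.ext h.2]
      · exact absurd h.1.ge K'.2.2
      · exact absurd h.1.le K.2.2
      · rw [Subtype.ext h.1]
    · rintro ⟨⟨H, K⟩, hH, hK, hHK⟩
      have hsub (hHX : H ≤ X) (hKX : K ≤ X) : False :=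
        coe_mul_ne_univ_of_inf_le hXtop (by simpa) (by simpa) (Or.inl le_top) hHK
      rcases hfac H K hH hK hHK with rfl | rfl
      · exact ⟨.inl ⟨K, hK, hsub le_rfl⟩, rfl⟩
      · exact ⟨.inr ⟨H, hH, (hsub · le_rfl)⟩, rfl⟩
  rw [CF2, ← Nat.card_eq_of_bijective Φ hΦ, Nat.card_sum]
  ring

lemma coe_zpowers_mul_zpowers_eq_univ {x y : G} (hgen : closure {x, y} = ⊤) (hy : y ^ 2 = 1)
    (hyx : y * x * y ∈ zpowers x) : (zpowers x : Set G) * (zpowers y : Set G) = univ := by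
  have hyy : y * y = 1 := by rw [← pow_two, hy]
  have hyinv : y⁻¹ = y := inv_eq_of_mul_eq_one_right hyy
  have hconj : ∀ h ∈ zpowers x, y * h * y ∈ zpowers x := by
    rintro _ ⟨k, rfl⟩
    have := (zpowers x).zpow_mem hyx k
    rwa [show y * x * y = y * x * y⁻¹ by rw [hyinv], conj_zpow, hyinv] at this
  have hyN : y ∈ normalizer (zpowers x : Set G) := by
    rw [mem_normalizer_iff, hyinv]
    refine fun h => ⟨hconj h, fun hh => ?_⟩
    have := hconj _ hh
    rwa [show y * (y * h * y) * y = (y * y) * h * (y * y) by group, hyy, one_mul, mul_one] at this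
  have : (zpowers x).Normal := by
    rw [← normalizer_eq_top_iff, eq_top_iff, ← hgen, closure_le]
    rintro _ (rfl | rfl)
    exacts [le_normalizer (mem_zpowers _), hyN]
  rw [← normal_mul, zpowers_eq_closure, zpowers_eq_closure, ← Subgroup.closure_union,
    ← insert_eq, hgen, coe_top]

lemma orderOf_eq_and_index_eq_two {x y : G} {N : ℕ}
    (hgen : closure {x, y} = ⊤) (hy : y ^ 2 = 1) (hyx : y * x * y ∈ zpowers x) (hx : x ^ N = 1)
    (hN : 0 < N) (hcard : Nat.card G = 2 * N) : orderOf x = N ∧ (zpowers x).index = 2 := by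
  have : Finite G := Nat.finite_of_card_ne_zero (by omega)
  have hxN : orderOf x ≤ N := orderOf_le_of_pow_eq_one hN hx
  have hy2 : orderOf y ≤ 2 := orderOf_le_of_pow_eq_one two_pos hy
  have hG : Nat.card G ≤ orderOf x * orderOf y := by
    rw [← Nat.card_univ, ← coe_zpowers_mul_zpowers_eq_univ hgen hy hyx, ← Nat.card_zpowers,
      ← Nat.card_zpowers]
    exact natCard_mul_le
  have hord : orderOf x = N := by nlinarith
  have hidx := (zpowers x).index_mul_card
  rw [Nat.card_zpowers, hord, hcard] at hidx
  exact ⟨hord, Nat.eq_of_mul_eq_mul_right hN hidx⟩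

lemma notMem_zpowers_of_index_eq_two {x y : G}
    (hgen : closure {x, y} = ⊤) (hidx : (zpowers x).index = 2) : y ∉ zpowers x := by
  intro hy
  have : zpowers x = ⊤ := by
    rw [eq_top_iff, ← hgen, closure_le]
    rintro _ (rfl | rfl)
    exacts [mem_zpowers _, hy]
  simp [this] at hidx

end

/-- Exponents `k` indexing the cyclic subgroups `⟨x ^ k * y⟩` outside `⟨x⟩`: even `k < 4q` and
odd `k < 2q`. -/
def expRep (q : ℕ) : Fin (2 * q) ⊕ Fin q → ℤ :=
  Sum.elim (fun a => 2 * a) (fun b => 2 * b + 1)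

lemma exists_expRep_modEq {q : ℕ} (hq : 0 < q) (k : ℤ) :
    ∃ i, expRep q i ≡ k [ZMOD 4 * q] ∨ expRep q i ≡ (1 - 2 * q) * k [ZMOD 4 * q] := by
  have hr : k % (4 * q) ≡ k [ZMOD 4 * q] := Int.mod_modEq k _
  have h0 : 0 ≤ k % (4 * q) := Int.emod_nonneg k (by omega)
  have h4 : k % (4 * q) < 4 * q := Int.emod_lt_of_pos k (by omega)
  generalize k % (4 * q) = r at hr h0 h4
  lift r to ℕ using h0
  obtain ⟨t, rfl | rfl⟩ := Nat.even_or_odd' r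
  · exact ⟨.inl ⟨t, by omega⟩, .inl (by simpa [expRep] using hr)⟩
  by_cases ht : t < q
  · exact ⟨.inr ⟨t, ht⟩, .inl (by simpa [expRep] using hr)⟩
  refine ⟨.inr ⟨t - q, by omega⟩, .inr ?_⟩
  obtain ⟨c, hc⟩ := (Int.modEq_iff_dvd.mp hr)
  rw [Int.modEq_iff_dvd]
  refine ⟨c - 2 * q * c - t, ?_⟩
  simp only [expRep, Sum.elim_inr, Nat.cast_sub (not_lt.mp ht)]
  push_cast at hc ⊢
  linear_combination (1 - 2 * (q : ℤ)) * hc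

lemma expRep_injective_modEq {q : ℕ} {i i' : Fin (2 * q) ⊕ Fin q}
    (h : expRep q i ≡ expRep q i' [ZMOD 4 * q] ∨
      expRep q i ≡ (1 - 2 * q) * expRep q i' [ZMOD 4 * q]) : i = i' := by
  have hmod : ∀ v : ℤ, 0 ≤ v → v < 4 * q → v % (4 * q) = v := fun _ => Int.emod_eq_of_lt
  have hev : ∀ a : ℤ, (1 - 2 * q) * (2 * a) % (4 * q) = 2 * a % (4 * q) := fun a => by
    rw [show (1 - 2 * (q : ℤ)) * (2 * a) = 2 * a + 4 * q * (-a) by ring,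
      Int.add_mul_emod_self_left]
  have hodd : ∀ b : ℤ, (1 - 2 * q) * (2 * b + 1) % (4 * q) = (2 * b + 1 + 2 * q) % (4 * q) :=
    fun b => by
      rw [show (1 - 2 * (q : ℤ)) * (2 * b + 1) = 2 * b + 1 + 2 * q + 4 * q * (-b - 1) by ring,
        Int.add_mul_emod_self_left]
  unfold Int.ModEq at h
  rcases i with ⟨a, ha⟩ | ⟨b, hb⟩ <;> rcases i' with ⟨a', ha'⟩ | ⟨b', hb'⟩ <;>
    simp only [expRep, Sum.elim_inl, Sum.elim_inr, hev, hodd, or_self] at h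
  · rw [hmod _ (by omega) (by omega), hmod _ (by omega) (by omega)] at h
    congr; omega
  · rw [hmod _ (by omega) (by omega), hmod _ (by omega) (by omega),
      hmod _ (by omega) (by omega)] at h
    omega
  · rw [hmod _ (by omega) (by omega), hmod _ (by omega) (by omega)] at h
    omega
  · rw [hmod _ (by omega) (by omega), hmod _ (by omega) (by omega),
      hmod _ (by omega) (by omega)] at h
    congr; omega

namespace Semidihedral

variable {G : Type*} [Group G] {x y : G} {q : ℕ}

lemma conj_zpow_eq (hy : y ^ 2 = 1) (hyx : y * x * y = x ^ (2 * (q : ℤ) - 1)) (k : ℤ) :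
    y * x ^ k * y = x ^ ((2 * q - 1) * k) := by
  have hyinv : y⁻¹ = y := inv_eq_of_mul_eq_one_right (by rw [← pow_two, hy])
  rw [show y * x ^ k * y = y * x ^ k * y⁻¹ by rw [hyinv], ← conj_zpow, hyinv, hyx, ← zpow_mul]

lemma zpow_mul_sq (hy : y ^ 2 = 1) (hyx : y * x * y = x ^ (2 * (q : ℤ) - 1)) (k : ℤ) :
    (x ^ k * y) ^ 2 = (x ^ (2 * q)) ^ k := by
  rw [pow_two, mul_assoc, ← mul_assoc y, conj_zpow_eq hy hyx, ← zpow_add, ← zpow_natCast,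
    ← zpow_mul]
  push_cast; ring_nf

lemma zpow_mul_inv (hy : y ^ 2 = 1) (hyx : y * x * y = x ^ (2 * (q : ℤ) - 1)) (k : ℤ) :
    (x ^ k * y)⁻¹ = x ^ ((1 - 2 * q) * k) * y := by
  have hyinv : y⁻¹ = y := inv_eq_of_mul_eq_one_right (by rw [← pow_two, hy])
  rw [mul_inv_rev, hyinv, ← zpow_neg, ← mul_one (y * _), ← mul_inv_cancel y, hyinv, ← mul_assoc,
    conj_zpow_eq hy hyx]
  ring_nf

lemma exists_eq_zpow_mul (hidx : (zpowers x).index = 2) (hyX : y ∉ zpowers x) {g : G}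
    (hg : g ∉ zpowers x) : ∃ k : ℤ, g = x ^ k * y := by
  have : g * y⁻¹ ∈ zpowers x := by
    simp [mul_mem_iff_of_index_two hidx, hg, hyX]
  obtain ⟨k, hk⟩ := this
  exact ⟨k, by simp only at hk; rw [hk, inv_mul_cancel_right]⟩

lemma zpow_mul_notMem (hyX : y ∉ zpowers x) (k : ℤ) : x ^ k * y ∉ zpowers x := fun h =>
  hyX ((mul_mem_cancel_left (zpow_mem_zpowers x k)).mp h)

lemma sq_mem_zpowers_of_notMem (hy : y ^ 2 = 1) (hyx : y * x * y = x ^ (2 * (q : ℤ) - 1))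
    (hidx : (zpowers x).index = 2) (hyX : y ∉ zpowers x) {g : G} (hg : g ∉ zpowers x) :
    g ^ 2 ∈ zpowers (x ^ (2 * q)) := by
  obtain ⟨k, rfl⟩ := exists_eq_zpow_mul hidx hyX hg
  rw [zpow_mul_sq hy hyx]
  exact zpow_mem_zpowers _ k

lemma pow_two_mul_sq (hx : orderOf x = 4 * q) : (x ^ (2 * q)) ^ 2 = 1 := by
  rw [← pow_mul, show 2 * q * 2 = orderOf x by rw [hx]; ring, pow_orderOf_eq_one]

lemma zpowers_zpow_mul_eq_iff (hy : y ^ 2 = 1) (hyx : y * x * y = x ^ (2 * (q : ℤ) - 1))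
    (hx : orderOf x = 4 * q) (hyX : y ∉ zpowers x) {j k : ℤ} :
    zpowers (x ^ j * y) = zpowers (x ^ k * y) ↔
      j ≡ k [ZMOD 4 * q] ∨ j ≡ (1 - 2 * q) * k [ZMOD 4 * q] := by
  have hmodEq : ∀ a b : ℤ, x ^ a = x ^ b ↔ a ≡ b [ZMOD 4 * q] := fun a b => by
    rw [zpow_eq_zpow_iff_modEq, hx]; push_cast; rfl
  have hsq : (x ^ k * y) ^ 2 ∈ zpowers x := by
    rw [zpow_mul_sq hy hyx]
    exact zpow_mem (pow_mem (mem_zpowers x) _) k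
  have hfour : (x ^ k * y) ^ 4 = 1 := by
    rw [show 4 = 2 * 2 from rfl, pow_mul, zpow_mul_sq hy hyx, ← zpow_natCast _ 2, ← zpow_mul,
      mul_comm k, zpow_mul, zpow_natCast, pow_two_mul_sq hx, one_zpow]
  constructor
  · intro h
    rcases mem_zpowers_of_pow_four_eq_one hfour (h ▸ mem_zpowers _) with h1 | h1 | h1 | h1
    · exact absurd (h1 ▸ one_mem _) (zpow_mul_notMem hyX j)
    · exact .inl ((hmodEq j k).mp (mul_right_cancel h1))
    · exact absurd (h1 ▸ hsq) (zpow_mul_notMem hyX j)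
    · rw [zpow_mul_inv hy hyx] at h1
      exact .inr ((hmodEq _ _).mp (mul_right_cancel h1))
  · rintro (h | h)
    · rw [(hmodEq j k).mpr h]
    · rw [(hmodEq _ _).mpr h, ← zpow_mul_inv hy hyx, zpowers_inv]

lemma card_cyclic_not_le_zpowers (hy : y ^ 2 = 1) (hyx : y * x * y = x ^ (2 * (q : ℤ) - 1))
    (hx : orderOf x = 4 * q) (hidx : (zpowers x).index = 2) (hyX : y ∉ zpowers x) (hq : 0 < q) :
    Nat.card {K : Subgroup G // IsCyclic K ∧ ¬K ≤ zpowers x} = 3 * q := by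
  let ι : Fin (2 * q) ⊕ Fin q → {K : Subgroup G // IsCyclic K ∧ ¬K ≤ zpowers x} := fun i =>
    ⟨zpowers (x ^ expRep q i * y), inferInstance,
      fun h => zpow_mul_notMem hyX _ (h (mem_zpowers _))⟩
  have hι : Function.Bijective ι := by
    refine ⟨fun i i' h => expRep_injective_modEq ?_, ?_⟩
    · exact (zpowers_zpow_mul_eq_iff hy hyx hx hyX).mp (congrArg Subtype.val h)
    · rintro ⟨K, hK, hKX⟩
      obtain ⟨g, rfl⟩ := (Subgroup.isCyclic_iff_exists_zpowers_eq_top K).mp hK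
      obtain ⟨k, rfl⟩ := exists_eq_zpow_mul hidx hyX fun hg => hKX (zpowers_le.mpr hg)
      obtain ⟨i, hi⟩ := exists_expRep_modEq hq k
      exact ⟨i, Subtype.ext ((zpowers_zpow_mul_eq_iff hy hyx hx hyX).mpr hi)⟩
  rw [← Nat.card_eq_of_bijective ι hι, Nat.card_sum, Nat.card_fin, Nat.card_fin]
  ring

lemma inf_zpowers_le_zpowers_sq {e : ℕ} (hq : q = 2 ^ (e + 1)) (hy : y ^ 2 = 1)
    (hyx : y * x * y = x ^ (2 * (q : ℤ) - 1)) (hx : orderOf x = 4 * q)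
    (hidx : (zpowers x).index = 2) (hyX : y ∉ zpowers x) {L : Subgroup G} (hL : IsCyclic L)
    (hLX : L ≠ zpowers x) : L ⊓ zpowers x ≤ zpowers (x ^ 2) := by
  by_cases hle : L ≤ zpowers x
  · have hxL : x ∉ L := fun h => hLX (le_antisymm hle (zpowers_le.mpr h))
    exact inf_le_left.trans (le_zpowers_sq_of_le_zpowers (m := e + 3)
      (by rw [hx, hq]; ring) hle hxL)
  obtain ⟨g, rfl⟩ := (Subgroup.isCyclic_iff_exists_zpowers_eq_top L).mp hL
  have hgX : g ∉ zpowers x := fun h => hle (zpowers_le.mpr h)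
  have hZX : zpowers (x ^ (2 * q)) ≤ zpowers x := zpowers_le.mpr (pow_mem (mem_zpowers x) _)
  refine (zpowers_inf_le_of_sq_mem hZX hgX (sq_mem_zpowers_of_notMem hy hyx hidx hyX hgX)).trans
    (zpowers_le.mpr ⟨q, ?_⟩)
  simp [← pow_mul]

lemma eq_zpowers_or_eq_zpowers_of_coe_mul_eq_univ [Finite G] {e : ℕ} (hq : q = 2 ^ (e + 1))
    (hy : y ^ 2 = 1) (hyx : y * x * y = x ^ (2 * (q : ℤ) - 1)) (hx : orderOf x = 4 * q)
    (hidx : (zpowers x).index = 2) (hyX : y ∉ zpowers x) {H K : Subgroup G} (hH : IsCyclic H)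
    (hK : IsCyclic K) (hHK : (H : Set G) * (K : Set G) = univ) :
    H = zpowers x ∨ K = zpowers x := by
  by_contra! ⟨hHX, hKX⟩
  by_cases hout : ¬H ≤ zpowers x ∧ ¬K ≤ zpowers x
  · obtain ⟨g, rfl⟩ := (Subgroup.isCyclic_iff_exists_zpowers_eq_top H).mp hH
    obtain ⟨h, rfl⟩ := (Subgroup.isCyclic_iff_exists_zpowers_eq_top K).mp hK
    have hcard := card_zpowers_mul_zpowers_le
      (sq_mem_zpowers_of_notMem hy hyx hidx hyX fun hg => hout.1 (zpowers_le.mpr hg))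
      (sq_mem_zpowers_of_notMem hy hyx hidx hyX fun hh => hout.2 (zpowers_le.mpr hh))
    have hZ : Nat.card (zpowers (x ^ (2 * q))) ≤ 2 := by
      rw [Nat.card_zpowers]
      exact orderOf_le_of_pow_eq_one two_pos (pow_two_mul_sq hx)
    have hG := (zpowers x).index_mul_card
    rw [hidx, Nat.card_zpowers, hx] at hG
    have hq2 : 2 ≤ q := hq ▸ Nat.le_self_pow (by omega) 2
    rw [hHK, Nat.card_univ, ← hG] at hcard
    omega
  · refine coe_mul_ne_univ_of_inf_le (fun h => notMem_zpowers_sq ?_ (h (mem_zpowers x)))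
      (inf_zpowers_le_zpowers_sq hq hy hyx hx hidx hyX hH hHX)
      (inf_zpowers_le_zpowers_sq hq hy hyx hx hidx hyX hK hKX) (by tauto) hHK
    rw [hx]; exact ⟨2 * q, by ring⟩

end Semidihedral

theorem cf2_semidihedral_general (n : ℕ) (hn : 4 ≤ n) (G : Type*) [Group G]
    (x y : G) (hx : x ^ (2 ^ (n - 1)) = 1) (hy : y ^ 2 = 1)
    (hrel : y * x * y = x ^ (2 ^ (n - 2) - 1))
    (hgen : Subgroup.closure {x, y} = ⊤) (hcard : Nat.card G = 2 ^ n) :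
    CF2 G = 3 * 2 ^ (n - 2) := by
  obtain ⟨e, rfl⟩ : ∃ e, n = e + 4 := ⟨n - 4, by omega⟩
  obtain ⟨q, hq⟩ : ∃ q, q = 2 ^ (e + 1) := ⟨_, rfl⟩
  have hq0 : 0 < q := hq ▸ by positivity
  rw [show 2 ^ (e + 4 - 1) = 4 * q by rw [hq, show e + 4 - 1 = e + 1 + 2 by omega, pow_add]; ring]
    at hx
  rw [show 2 ^ (e + 4 - 2) = 2 * q by rw [hq, show e + 4 - 2 = e + 1 + 1 by omega, pow_add]; ring]
    at hrel ⊢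
  rw [show 2 ^ (e + 4) = 2 * (4 * q) by rw [hq, pow_add]; ring] at hcard
  replace hrel : y * x * y = x ^ (2 * (q : ℤ) - 1) := by
    rw [hrel, ← zpow_natCast, Nat.cast_sub (by omega)]; push_cast; rfl
  have : Finite G := Nat.finite_of_card_ne_zero (by omega)
  obtain ⟨hord, hidx⟩ := orderOf_eq_and_index_eq_two hgen hy ⟨_, hrel.symm⟩ hx (by omega) hcard
  have hyX := notMem_zpowers_of_index_eq_two hgen hidx
  rw [cf2_eq_two_mul_card hidx fun H K =>
      Semidihedral.eq_zpowers_or_eq_zpowers_of_coe_mul_eq_univ hq hy hrel hord hidx hyX,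
    Semidihedral.card_cyclic_not_le_zpowers hy hrel hord hidx hyX hq0]
  ring

theorem cf2_semidihedral (n : ℕ) (hn : 4 ≤ n) (G : Type*) [Group G] [Fintype G]
    (x y : G) (hx : x ^ (2 ^ (n - 1)) = 1) (hy : y ^ 2 = 1)
    (hrel : y * x * y = x ^ (2 ^ (n - 2) - 1))
    (hgen : Subgroup.closure {x, y} = ⊤) (hcard : Nat.card G = 2 ^ n) :
    CF2 G = 3 * 2 ^ (n - 2) :=
  cf2_semidihedral_general n hn G x y hx hy hrel hgen hcard
end

section
/- For m ≥ 2, the group ℤ₂ × Q_{2^{m+1}} (direct product of the cyclic group of order 2 with the generalized quaternion group of order 2^{m+1}) cannot be written as a product of two cyclic subgroups; i.e. CF₂(ℤ₂ × Q_{2^{m+1}}) = 0. -/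
open Pointwise

theorem IsCyclic.card_le_two_of_forall_sq_eq_one {C : Type*} [Group C] [IsCyclic C]
    (hC : ∀ c : C, c ^ 2 = 1) : Nat.card C ≤ 2 := by
  obtain ⟨g, hg⟩ := IsCyclic.exists_generator (α := C)
  rw [← orderOf_eq_card_of_forall_mem_zpowers hg]
  exact Nat.le_of_dvd two_pos (orderOf_dvd_of_pow_eq_one (hC g))

theorem card_le_four_of_mul_eq_univ {G A : Type*} [Group G] [Group A] {H K : Subgroup G}
    [IsCyclic H] [IsCyclic K] (hHK : (H : Set G) * (K : Set G) = Set.univ) {f : G →* A}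
    (hf : Function.Surjective f) (hA : ∀ a : A, a ^ 2 = 1) : Nat.card A ≤ 4 := by
  have hcyc (L : Subgroup G) [IsCyclic L] : Nat.card (L.map f) ≤ 2 :=
    have : IsCyclic (L.map f) := isCyclic_of_surjective _ (f.subgroupMap_surjective L)
    IsCyclic.card_le_two_of_forall_sq_eq_one fun c => Subtype.ext (hA c)
  have himage : (H.map f : Set A) * (K.map f : Set A) = Set.univ := by
    rw [Subgroup.coe_map, Subgroup.coe_map, ← Set.image_mul, hHK, Set.image_univ_of_surjective hf]
  calc Nat.card A = Nat.card ((H.map f : Set A) * (K.map f : Set A)) := by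
        rw [himage, Nat.card_univ]
    _ ≤ Nat.card (H.map f) * Nat.card (K.map f) := Set.natCard_mul_le
    _ ≤ 2 * 2 := Nat.mul_le_mul (hcyc H) (hcyc K)

namespace QuaternionGroup

def modTwoHom {n : ℕ} (hn : Even n) : QuaternionGroup n →* Multiplicative (ZMod 2 × ZMod 2) :=
  let c := ZMod.castHom (dvd_mul_right 2 n) (ZMod 2)
  { toFun := fun
      | a i => .ofAdd (c i, 0)
      | xa i => .ofAdd (c i, 1)
    map_one' := show Multiplicative.ofAdd (c 0, 0) = 1 by simp
    map_mul' := by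
      have hc : c n = 0 := by simpa [ZMod.natCast_eq_zero_iff_even]
      rintro (i | i) (j | j) <;>
        simp [← ofAdd_add, hc, CharTwo.sub_eq_add, CharTwo.add_self_eq_zero, add_comm] }

theorem modTwoHom_surjective {n : ℕ} (hn : Even n) : Function.Surjective (modTwoHom hn) := by
  intro t
  obtain ⟨⟨x, y⟩, rfl⟩ := Multiplicative.ofAdd.surjective t
  have hy : y = 0 ∨ y = 1 := by revert y; decide
  have hx : ZMod.castHom (dvd_mul_right 2 n) (ZMod 2) (x.val : ZMod (2 * n)) = x := by
    rw [map_natCast, ZMod.natCast_zmod_val]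
  rcases hy with rfl | rfl
  exacts [⟨a x.val, congrArg Multiplicative.ofAdd (Prod.ext hx rfl)⟩,
    ⟨xa x.val, congrArg Multiplicative.ofAdd (Prod.ext hx rfl)⟩]

end QuaternionGroup

theorem cf2_z2_quaternion (m : ℕ) (hm : 2 ≤ m) :
    CF2 (Multiplicative (ZMod 2) × QuaternionGroup (2 ^ (m - 1))) = 0 := by
  have hn : Even (2 ^ (m - 1)) := (Nat.even_pow' (by omega)).2 even_two
  let f := (MonoidHom.id (Multiplicative (ZMod 2))).prodMap (QuaternionGroup.modTwoHom hn)
  have hf : Function.Surjective f :=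
    Prod.map_surjective.2 ⟨Function.surjective_id, QuaternionGroup.modTwoHom_surjective hn⟩
  rw [CF2, Nat.card_eq_zero]
  refine .inl ⟨fun ⟨⟨H, K⟩, hH, hK, hHK⟩ => ?_⟩
  have := card_le_four_of_mul_eq_univ hHK hf (by decide)
  simp at this
end
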